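/- arXiv:math/9205211 — 8 statements merged into one kernel-verified Lean document; each statement's English description precedes it below -/
import Mathlib

section
/- Let x ≥ 1 be an integer. Define a sequence of integers P_0, P_1, P_2, … by P_0 = 1 and, for k ≥ 1, P_k = −∑_{i=0}^{k−1} [x > k−i]·P_i (equivalently, ∑_{i=0}^{k} [x > k−i]·P_i = 0 for every k ≥ 1, since [x > 0] = 1). Then for every integer k ≥ 1, P_k = [x divides k] − [x divides k−1]. -/
/-!
Let `g j = [0 ≤ j ∧ x ∣ j]` (`Libri.multIndicator`) and `Q i = g i - g (i - 1)` (`Libri.seq`);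
the guard `0 ≤ j` gives `g (-1) = 0`, hence `Q 0 = 1` even for `x = 1`. The prefix sums of `Q`
telescope, `∑_{i<m} Q i = g (m - 1)`, so for `k ≥ 1` the window `∑_{k-x < i ≤ k} Q i` equals
`g k - g (k - x)`. This vanishes: for `k ≥ x` because `g` is `x`-periodic on `j ≥ 0`, and for
`k < x` because both terms are `0`. So `Q` satisfies Libri's recursion, which determines the
sequence from its first term.
-/

open Finset

theorem eq_of_eq_neg_sum_range {R : Type*} [Ring R] (c : ℕ → ℕ → R) {P Q : ℕ → R}
    (h0 : P 0 = Q 0)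
    (hP : ∀ k, 1 ≤ k → P k = -∑ i ∈ range k, c k i * P i)
    (hQ : ∀ k, 1 ≤ k → Q k = -∑ i ∈ range k, c k i * Q i) : P = Q := by
  funext k
  induction k using Nat.strong_induction_on with
  | _ k ih =>
    rcases Nat.eq_zero_or_pos k with rfl | hk
    · exact h0
    · rw [hP k hk, hQ k hk]
      congr 1
      exact sum_congr rfl fun i hi => by rw [ih i (mem_range.mp hi)]

namespace Libri

def multIndicator (x j : ℤ) : ℤ := if 0 ≤ j ∧ x ∣ j then 1 else 0

def seq (x : ℤ) (i : ℕ) : ℤ := multIndicator x i - multIndicator x ((i : ℤ) - 1)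

variable {x : ℤ}

theorem multIndicator_neg_one : multIndicator x (-1) = 0 := by
  simp [multIndicator]

theorem multIndicator_sub_self {j : ℤ} (hx : 0 ≤ x) (hj : x ≤ j) :
    multIndicator x (j - x) = multIndicator x j := by
  simp only [multIndicator, dvd_sub_self_right, sub_nonneg.mpr hj, hx.trans hj, true_and]

theorem multIndicator_eq_zero_of_pos_of_lt {j : ℤ} (hj : 0 < j) (hjx : j < x) :
    multIndicator x j = 0 := by
  simp only [multIndicator, ite_eq_right_iff, and_imp]
  intro _ hdvd
  exact absurd (Int.eq_zero_of_dvd_of_nonneg_of_lt hj.le hjx hdvd) hj.ne'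

theorem sum_range_seq (x : ℤ) (m : ℕ) :
    ∑ i ∈ range m, seq x i = multIndicator x ((m : ℤ) - 1) := by
  induction m with
  | zero => simp [multIndicator_neg_one]
  | succ m ih =>
    rw [sum_range_succ, ih, seq]
    push_cast
    ring_nf

theorem filter_range_sub_lt (n k : ℕ) :
    (range (k + 1)).filter (fun i : ℕ => (k : ℤ) - i < n) = Ico (k + 1 - n) (k + 1) := by
  ext i
  simp only [mem_filter, mem_range, mem_Ico]
  omega

theorem sum_window_seq {n k : ℕ} (hk : 1 ≤ k) :
    ∑ i ∈ range (k + 1), (if (k : ℤ) - i < n then (1 : ℤ) else 0) * seq n i = 0 := by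
  simp only [ite_mul, one_mul, zero_mul]
  rw [← sum_filter, filter_range_sub_lt, sum_Ico_eq_sub _ (Nat.sub_le _ _),
    sum_range_seq, sum_range_seq, Nat.cast_add, Nat.cast_one, add_sub_cancel_right,
    sub_eq_zero]
  rcases le_or_gt n k with hnk | hkn
  · rw [Nat.cast_sub (by omega), ← multIndicator_sub_self (x := (n : ℤ)) (by omega) (by omega)]
    congr 1
    push_cast
    ring
  · rw [Nat.sub_eq_zero_of_le hkn, Nat.cast_zero, zero_sub, multIndicator_neg_one,
      multIndicator_eq_zero_of_pos_of_lt (by omega) (by omega)]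

theorem seq_eq_neg_sum {n k : ℕ} (hn : 1 ≤ n) (hk : 1 ≤ k) :
    seq n k = -∑ i ∈ range k, (if (k : ℤ) - i < n then (1 : ℤ) else 0) * seq n i := by
  have h := sum_window_seq (n := n) hk
  rw [sum_range_succ, sub_self, if_pos (by omega), one_mul] at h
  linear_combination h

end Libri

/-- Libri's recursively defined sequence, in Iverson-bracket form:
if `x ≥ 1`, `P 0 = 1` and `P k = -∑_{i=0}^{k-1} [x > k-i]·P i` for `k ≥ 1`,
then `P k = [x ∣ k] - [x ∣ k-1]` for every `k ≥ 1`. -/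
theorem stmt_0 (x : ℤ) (hx : 1 ≤ x) (P : ℕ → ℤ) (hP0 : P 0 = 1)
    (hrec : ∀ k : ℕ, 1 ≤ k →
      P k = -∑ i ∈ Finset.range k,
        (if (k : ℤ) - (i : ℤ) < x then (1 : ℤ) else 0) * P i) :
    ∀ k : ℕ, 1 ≤ k →
      P k = (if x ∣ (k : ℤ) then (1 : ℤ) else 0) -
            (if x ∣ ((k : ℤ) - 1) then (1 : ℤ) else 0) := by
  lift x to ℕ using (by omega)
  have hP : P = Libri.seq x :=
    eq_of_eq_neg_sum_range _ (by simp [hP0, Libri.seq, Libri.multIndicator])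
      hrec fun k hk => Libri.seq_eq_neg_sum (by exact_mod_cast hx) hk
  intro k hk
  simp [hP, Libri.seq, Libri.multIndicator, hk]
end

section
/- Let x ≥ 1 and m ≥ 1 be integers. Define P_0 = 1 and, for k ≥ 1, P_k = −∑_{i=0}^{k−1} [x > k−i]·P_i, and set a_k = k·[x > k] for every integer k ≥ 0. Then ∑_{k=0}^{m−1} a_{m−k}·P_k = 1 − x·[x divides m]; consequently (1 − ∑_{k=0}^{m−1} a_{m−k}·P_k)/x = [x divides m]. -/
/-!
The recursion says that for `k ≥ 1` the `x` consecutive terms `P (k+1-x), …, P k` sum to zero,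
so the partial sums `∑_{i ≤ k} P i` are `x`-periodic and equal `[x ∣ k]`. Thus `P` is the
difference sequence of `d k = [x ∣ k]`, and the convolution `∑_{k<m} a (m-k) P k` telescopes to
`F m - F (m-1)` with `F n = ∑_{k<n} a (n-k) d k`. In `F n` only the multiple `k = n - n % x`
survives, so `F n = n % x`, and `(n+1) % x - n % x = 1 - x·[x ∣ n+1]`.
-/

open Finset

section PartialSums

variable {R : Type*}

lemma sum_range_succ_ite_sub_lt [AddCommMonoid R] (x k : ℕ) (P : ℕ → R) :
    ∑ i ∈ range (k + 1), (if k - i < x then P i else 0) = ∑ i ∈ Ico (k + 1 - x) (k + 1), P i := by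
  rw [← sum_filter]
  congr 1
  ext i
  simp only [mem_filter, mem_range, mem_Ico]
  omega

lemma sum_range_succ_eq_ite_dvd_of_window_sum_eq_zero [AddCommMonoidWithOne R] {x : ℕ}
    (hx : 0 < x) {P : ℕ → R} (h0 : P 0 = 1)
    (hwindow : ∀ k, 1 ≤ k → ∑ i ∈ Ico (k + 1 - x) (k + 1), P i = 0) (k : ℕ) :
    ∑ i ∈ range (k + 1), P i = if x ∣ k then 1 else 0 := by
  induction k using Nat.strong_induction_on with
  | _ k ih =>
    rcases Nat.eq_zero_or_pos k with rfl | hk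
    · simp [h0]
    rw [← sum_range_add_sum_Ico _ (Nat.sub_le (k + 1) x), hwindow k hk, add_zero]
    rcases Nat.lt_or_ge k x with hkx | hxk
    · rw [Nat.sub_eq_zero_of_le hkx, sum_range_zero, if_neg (Nat.not_dvd_of_pos_of_lt hk hkx)]
    · rw [show k + 1 - x = k - x + 1 by omega, ih (k - x) (by omega)]
      simp only [Nat.dvd_sub_iff_left hxk dvd_rfl]

lemma sum_range_mul_eq_sub_of_partialSums [Ring R] (a P d : ℕ → R)
    (hd : ∀ k, ∑ i ∈ range (k + 1), P i = d k) (n : ℕ) :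
    ∑ k ∈ range (n + 1), a (n + 1 - k) * P k
      = ∑ k ∈ range (n + 1), a (n + 1 - k) * d k - ∑ k ∈ range n, a (n - k) * d k := by
  have h0 : P 0 = d 0 := by simpa using hd 0
  have hsucc (k : ℕ) : P (k + 1) = d (k + 1) - d k := by
    rw [← hd, ← hd, sum_range_succ, add_sub_cancel_left]
  simp only [sum_range_succ', hsucc, h0, Nat.add_sub_add_right, mul_sub, sum_sub_distrib]
  abel

end PartialSums

lemma sum_range_mul_ite_dvd_eq_mod {x : ℕ} (hx : 0 < x) (n : ℕ) :
    ∑ k ∈ range n, ((n - k : ℕ) : ℤ) * (if n - k < x then 1 else 0) * (if x ∣ k then 1 else 0)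
      = ((n % x : ℕ) : ℤ) := by
  have hterm : ∀ k ∈ range n,
      ((n - k : ℕ) : ℤ) * (if n - k < x then 1 else 0) * (if x ∣ k then 1 else 0)
        = if n - n % x = k then ((n % x : ℕ) : ℤ) else 0 := by
    intro k hk
    rw [mem_range] at hk
    by_cases hkn : n - n % x = k
    · have hdvd : x ∣ k := hkn ▸ Nat.dvd_sub_mod n
      rw [if_pos hkn, if_pos hdvd, if_pos (by have := Nat.mod_lt n hx; omega)]
      simp [← hkn, Nat.sub_sub_self (Nat.mod_le n x)]
    · rw [if_neg hkn]
      by_contra hne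
      obtain ⟨q, rfl⟩ : x ∣ k := by by_contra h; simp [h] at hne
      have hlt : n - x * q < x := by by_contra h; simp [h] at hne
      have hmod := Nat.mul_add_mod x q (n - x * q)
      rw [Nat.add_sub_cancel' hk.le, Nat.mod_eq_of_lt hlt] at hmod
      omega
  rw [sum_congr rfl hterm, sum_ite_eq]
  split_ifs with h
  · rfl
  · simp only [mem_range, not_lt] at h
    have := Nat.mod_le n x
    simp [show n % x = 0 by omega]

lemma natCast_mod_succ_sub_mod (x n : ℕ) :
    (((n + 1) % x : ℕ) : ℤ) - ((n % x : ℕ) : ℤ) = 1 - x * (if x ∣ n + 1 then 1 else 0) := by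
  have h1 := Nat.div_add_mod (n + 1) x
  have h2 := Nat.div_add_mod n x
  rw [Nat.succ_div] at h1
  split_ifs at h1 ⊢ <;> zify at h1 h2 ⊢ <;> linear_combination h1 - h2

/-- Libri's divisibility detector, in Iverson-bracket form: with `x ≥ 1`, `m ≥ 1`,
`P 0 = 1`, `P k = -∑_{i=0}^{k-1} [x > k-i]·P i` for `k ≥ 1`, and `a k = k·[x > k]`,
one has `∑_{k=0}^{m-1} a (m-k) · P k = 1 - x·[x ∣ m]`, hence
`(1 - ∑_{k=0}^{m-1} a (m-k) · P k)/x = [x ∣ m]`. -/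
theorem stmt_1 (x : ℤ) (hx : 1 ≤ x) (m : ℕ) (hm : 1 ≤ m)
    (P : ℕ → ℤ) (hP0 : P 0 = 1)
    (hrec : ∀ k : ℕ, 1 ≤ k →
      P k = -∑ i ∈ Finset.range k,
        (if (k : ℤ) - (i : ℤ) < x then (1 : ℤ) else 0) * P i)
    (a : ℕ → ℤ)
    (ha : ∀ k : ℕ, a k = (k : ℤ) * (if (k : ℤ) < x then (1 : ℤ) else 0)) :
    (∑ k ∈ Finset.range m, a (m - k) * P k)
        = 1 - x * (if x ∣ (m : ℤ) then (1 : ℤ) else 0) ∧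
    (1 - ∑ k ∈ Finset.range m, a (m - k) * P k) / x
        = (if x ∣ (m : ℤ) then (1 : ℤ) else 0) := by
  lift x to ℕ using by omega
  have hx : 0 < x := by exact_mod_cast hx
  have hwindow (k : ℕ) (hk : 1 ≤ k) : ∑ i ∈ Ico (k + 1 - x) (k + 1), P i = 0 := by
    have hcond : ∀ i ∈ range k,
        (if k - i < x then P i else 0) = (if (k : ℤ) - i < x then 1 else 0) * P i := by
      intro i hi
      rw [mem_range] at hi
      rw [ite_mul, one_mul, zero_mul]
      exact if_congr (by omega) rfl rfl
    rw [← sum_range_succ_ite_sub_lt, sum_range_succ, Nat.sub_self, if_pos hx, sum_congr rfl hcond]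
    linarith [hrec k hk]
  have hpartial := sum_range_succ_eq_ite_dvd_of_window_sum_eq_zero hx hP0 hwindow
  have ha' (j : ℕ) : a j = (j : ℤ) * (if j < x then 1 else 0) := by
    simp only [ha, Nat.cast_lt]
  obtain ⟨n, rfl⟩ : ∃ n, m = n + 1 := ⟨m - 1, by omega⟩
  have hsum : ∑ k ∈ range (n + 1), a (n + 1 - k) * P k = 1 - x * (if x ∣ n + 1 then 1 else 0) := by
    rw [sum_range_mul_eq_sub_of_partialSums a P _ hpartial]
    simp only [ha', ← natCast_mod_succ_sub_mod, ← sum_range_mul_ite_dvd_eq_mod hx]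
  simp only [Int.natCast_dvd_natCast]
  refine ⟨hsum, ?_⟩
  rw [hsum, sub_sub_cancel, Int.mul_ediv_cancel_left _ (by positivity)]
end

section
/- For all natural numbers n and k with k ≤ n, the elementary symmetric sum ∑ x_1·x_2⋯x_k, taken over all strictly increasing integer sequences 1 ≤ x_1 < x_2 < ⋯ < x_k ≤ n (equivalently, over all k-element subsets of {1, 2, …, n}), equals the Stirling cycle number c(n+1, n+1−k). -/
/-- The Stirling cycle number `c(n,k)`: the number of permutations of an
`n`-element set whose decomposition into disjoint cycles (counting fixed
points as cycles) consists of exactly `k` cycles. -/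
noncomputable def stirlingCycle (n k : ℕ) : ℕ :=
  Nat.card {σ : Equiv.Perm (Fin n) //
    σ.cycleType.card + Nat.card {x : Fin n // σ x = x} = k}

/-!
Both sides are coefficients of the rising factorial `X (X + 1) ⋯ (X + n)`. By Vieta, the
elementary symmetric sum `e_k(1, …, n)` is the coefficient of `X ^ (n - k)` in
`(X + 1) ⋯ (X + n)`. The cycle counts satisfy the recurrence `c(n+1, j) = c(n, j-1) + n c(n, j)`
of these coefficients: a permutation of `{0, …, n}` is `swap 0 p * σ` with `σ` fixing `0`; for
`p = 0` the point `0` is an extra fixed point, and otherwise `0` is inserted into the cycle of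
`p`, which does not change the number of cycles.
-/

open Equiv Finset

namespace Equiv.Perm

variable {α : Type*}

theorem SameCycle.induction_on [Finite α] {f : Perm α} {p : α → Prop} {x y : α}
    (h : f.SameCycle x y) (hx : p x) (hstep : ∀ z, f.SameCycle x z → p z → p (f z)) :
    p y := by
  obtain ⟨n, rfl⟩ := h.exists_nat_pow_eq
  clear h
  induction n with
  | zero => exact hx
  | succ n ih =>
    rw [pow_succ', mul_apply]
    exact hstep _ ⟨n, by simp⟩ ih

variable [Fintype α] [DecidableEq α]

theorem card_parts_partition (σ : Perm α) :
    σ.partition.parts.card = σ.cycleType.card + (Fintype.card α - #σ.support) := by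
  simp [parts_partition]

theorem mul_inv_cycleOf_apply (σ : Perm α) (a x : α) :
    (σ * (σ.cycleOf a)⁻¹) x = if σ.SameCycle a x then x else σ x := by
  rw [cycleOf_inv, mul_apply, cycleOf_apply]
  split_ifs with h h' h' <;> simp_all [sameCycle_inv]

theorem card_parts_partition_mul_inv_cycleOf (σ : Perm α) (a : α) :
    (σ * (σ.cycleOf a)⁻¹).partition.parts.card + 1
      = σ.partition.parts.card + #{x | σ.SameCycle a x} := by
  by_cases ha : σ a = a
  · have horbit : ({x | σ.SameCycle a x} : Finset α) = {a} := by
      ext x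
      simp only [mem_filter, mem_univ, true_and, mem_singleton]
      exact ⟨fun h => (h.eq_of_left ha).symm, fun h => h ▸ SameCycle.rfl⟩
    rw [(cycleOf_eq_one_iff σ).2 ha, inv_one, mul_one, horbit, card_singleton]
  · set c := σ.cycleOf a
    have hc : c ∈ σ.cycleFactorsFinset := cycleOf_mem_cycleFactorsFinset_iff.2 (mem_support.2 ha)
    have hsupp : c.support = ({x | σ.SameCycle a x} : Finset α) := by
      ext x
      simp [c, mem_support_cycleOf_iff' ha]
    have hdisj := disjoint_mul_inv_of_mem_cycleFactorsFinset hc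
    have hcycleType : σ.cycleType = (σ * c⁻¹).cycleType + {#c.support} := by
      rw [← (isCycle_cycleOf σ ha).cycleType, ← hdisj.cycleType_mul, inv_mul_cancel_right]
    have hcard : #σ.support = #(σ * c⁻¹).support + #c.support := by
      rw [← hdisj.card_support_mul, inv_mul_cancel_right]
    have := card_le_univ σ.support
    rw [card_parts_partition, card_parts_partition, hcycleType, ← hsupp, Multiset.card_add,
      Multiset.card_singleton]
    omega

section swapMul

variable {τ : Perm α} {a b : α}

theorem sameCycle_swap_mul_iff (ha : τ a = a) (hb : b ≠ a) {x : α} :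
    (swap a b * τ).SameCycle a x ↔ x = a ∨ τ.SameCycle b x := by
  have hτa : ∀ {y}, τ y = a ↔ y = a := fun {y} => by rw [← ha, τ.injective.eq_iff, ha]
  have hne : ∀ {y}, τ.SameCycle b y → y ≠ a := fun h hy => hb ((hy ▸ h).eq_of_right ha)
  have hga : (swap a b * τ) a = b := by simp [ha]
  have hgy : ∀ {y}, y ≠ a → τ y ≠ b → (swap a b * τ) y = τ y := fun hy hyb =>
    swap_apply_of_ne_of_ne (mt hτa.1 hy) hyb
  have hgb : (swap a b * τ).SameCycle a b := ⟨1, by simpa using hga⟩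
  constructor
  · refine fun h => h.induction_on (p := fun x => x = a ∨ τ.SameCycle b x) (Or.inl rfl)
      fun y _ hy => ?_
    rcases hy with rfl | hy
    · exact Or.inr (by rw [hga])
    · by_cases hyb : τ y = b
      · left; simp [hyb]
      · exact Or.inr (hgy (hne hy) hyb ▸ sameCycle_apply_right.2 hy)
  · rintro (rfl | h)
    · exact SameCycle.rfl
    · refine h.induction_on hgb fun y hby hy => ?_
      by_cases hyb : τ y = b
      · rwa [hyb]
      · exact hgy (hne hby) hyb ▸ sameCycle_apply_right.2 hy

/-- `swap a b * τ` is `τ` with the fixed point `a` inserted into the cycle of `b` just before `b`,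
so deleting that cycle from either permutation leaves the same permutation. -/
theorem swap_mul_mul_inv_cycleOf (ha : τ a = a) (hb : b ≠ a) :
    swap a b * τ * ((swap a b * τ).cycleOf a)⁻¹ = τ * (τ.cycleOf b)⁻¹ := by
  ext x
  simp only [mul_inv_cycleOf_apply, sameCycle_swap_mul_iff ha hb]
  by_cases hx : x = a
  · subst hx
    simp [ha]
  by_cases hbx : τ.SameCycle b x
  · simp [hbx]
  · have : τ x ≠ b := fun h => hbx (h ▸ sameCycle_apply_right.2 SameCycle.rfl).symm
    simp [hx, hbx, swap_apply_of_ne_of_ne (mt (τ.injective.eq_iff' ha).1 hx) this]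

theorem card_parts_partition_swap_mul (ha : τ a = a) (hb : b ≠ a) :
    (swap a b * τ).partition.parts.card + 1 = τ.partition.parts.card := by
  have horbit : ({x | (swap a b * τ).SameCycle a x} : Finset α)
      = insert a ({x | τ.SameCycle b x} : Finset α) := by
    ext x
    simp [sameCycle_swap_mul_iff ha hb]
  have ha' : a ∉ ({x | τ.SameCycle b x} : Finset α) := by
    simpa using fun h : τ.SameCycle b a => hb (h.eq_of_right ha)
  have h₁ := card_parts_partition_mul_inv_cycleOf (swap a b * τ) a
  have h₂ := card_parts_partition_mul_inv_cycleOf τ b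
  rw [swap_mul_mul_inv_cycleOf ha hb, horbit, card_insert_of_notMem ha'] at h₁
  omega

end swapMul

theorem card_parts_partition_extendDomain {β : Type*} [Fintype β] [DecidableEq β]
    {p : β → Prop} [DecidablePred p] (e : Perm α) (f : α ≃ Subtype p) :
    (e.extendDomain f).partition.parts.card
      = e.partition.parts.card + (Fintype.card β - Fintype.card α) := by
  have hα : Fintype.card α ≤ Fintype.card β := by
    rw [Fintype.card_congr f]; exact Fintype.card_subtype_le p
  have := card_le_univ e.support
  rw [card_parts_partition, card_parts_partition, cycleType_extendDomain,
    card_support_extend_domain]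
  omega

theorem decomposeFin_symm_zero {n : ℕ} (e : Perm (Fin n)) :
    decomposeFin.symm (0, e) = e.extendDomain (finSuccAboveEquiv 0) := by
  ext x
  refine Fin.cases ?_ (fun i => ?_) x
  · rw [decomposeFin_symm_apply_zero, extendDomain_apply_not_subtype]
    simp
  · have hsucc : ∀ j : Fin n, (j.succ : Fin (n + 1)) = finSuccAboveEquiv 0 j := fun j => by
      simp [finSuccAboveEquiv_apply]
    rw [decomposeFin_symm_apply_succ, swap_self, refl_apply, hsucc i, extendDomain_apply_image,
      hsucc]

theorem decomposeFin_symm_eq_swap_mul {n : ℕ} (p : Fin (n + 1)) (e : Perm (Fin n)) :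
    decomposeFin.symm (p, e) = swap 0 p * decomposeFin.symm (0, e) := by
  ext x
  refine Fin.cases ?_ (fun i => ?_) x <;> simp

theorem card_parts_partition_decomposeFin_symm {n : ℕ} (p : Fin (n + 1)) (e : Perm (Fin n)) :
    (decomposeFin.symm (p, e)).partition.parts.card
      = e.partition.parts.card + if p = 0 then 1 else 0 := by
  have hzero : (decomposeFin.symm (0, e)).partition.parts.card = e.partition.parts.card + 1 := by
    simp [decomposeFin_symm_zero, card_parts_partition_extendDomain]
  split_ifs with hp
  · rw [hp, hzero]
  · have := card_parts_partition_swap_mul (decomposeFin_symm_apply_zero 0 e) hp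
    rw [decomposeFin_symm_eq_swap_mul]
    omega

end Equiv.Perm

open Equiv.Perm

theorem stirlingCycle_eq_card (n k : ℕ) :
    stirlingCycle n k = #{σ : Perm (Fin n) | σ.partition.parts.card = k} := by
  rw [stirlingCycle, Nat.card_eq_fintype_card, Fintype.card_subtype]
  congr! 3 with σ
  rw [card_parts_partition, ← card_compl, Nat.card_eq_fintype_card, Fintype.card_subtype]
  congr 2
  ext x
  simp

theorem card_perm_fin_succ_partition (n j : ℕ) :
    #{σ : Perm (Fin (n + 1)) | σ.partition.parts.card = j}
      = #{e : Perm (Fin n) | e.partition.parts.card + 1 = j}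
        + n * #{e : Perm (Fin n) | e.partition.parts.card = j} := by
  simp only [card_filter]
  rw [← decomposeFin.symm.sum_comp, Fintype.sum_prod_type, Fin.sum_univ_succ]
  simp only [card_parts_partition_decomposeFin_symm, Fin.succ_ne_zero, if_true, if_false,
    add_zero, sum_const, card_univ, Fintype.card_fin, smul_eq_mul]

theorem stirlingCycle_eq_stirlingFirst (n k : ℕ) : stirlingCycle n k = Nat.stirlingFirst n k := by
  induction n generalizing k with
  | zero => cases k <;> simp [stirlingCycle_eq_card, card_parts_partition, filter_singleton]
  | succ n ih =>
    rw [stirlingCycle_eq_card, card_perm_fin_succ_partition, ← stirlingCycle_eq_card, ih]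
    cases k with
    | zero => cases n <;> simp
    | succ k =>
      simp only [Nat.add_right_cancel_iff, ← stirlingCycle_eq_card, ih]
      rw [Nat.stirlingFirst_succ_succ, add_comm]

open Polynomial

theorem ascPochhammer_coeff_eq_stirlingFirst (n k : ℕ) :
    (ascPochhammer ℕ n).coeff k = Nat.stirlingFirst n k := by
  induction n generalizing k with
  | zero => cases k <;> simp [coeff_one]
  | succ n ih =>
    rw [ascPochhammer_succ_right, mul_add, coeff_add, ← C_eq_natCast, coeff_mul_C]
    cases k with
    | zero => cases n <;> simp [ih]
    | succ k =>
      rw [coeff_mul_X, ih, ih, Nat.stirlingFirst_succ_succ, Nat.cast_id, add_comm, mul_comm]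

theorem ascPochhammer_succ_eq_X_mul_prod (n : ℕ) :
    ascPochhammer ℕ (n + 1) = X * ∏ i : Fin n, (X + C ((i : ℕ) + 1)) := by
  induction n with
  | zero => simp
  | succ n ih =>
    rw [ascPochhammer_succ_right, ih, Fin.prod_univ_castSucc]
    simp only [Fin.val_castSucc, Fin.val_last, ← C_eq_natCast]
    push_cast
    ring

theorem sum_strictMono_prod_eq_sum_powersetCard {ι R : Type*} [Fintype ι] [LinearOrder ι]
    [CommSemiring R] (k : ℕ) (w : ι → R) :
    ∑ f ∈ univ.filter (fun f : Fin k → ι => ∀ a b : Fin k, a < b → f a < f b),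
        ∏ i, w (f i)
      = ∑ t ∈ univ.powersetCard k, ∏ x ∈ t, w x := by
  have hmono {f : Fin k → ι}
      (hf : f ∈ univ.filter fun f : Fin k → ι => ∀ a b : Fin k, a < b → f a < f b) :
      StrictMono f := fun a b h => (mem_filter.1 hf).2 a b h
  have hcard {f : Fin k → ι} (hf : StrictMono f) : #(univ.image f) = k := by
    simp [card_image_of_injective _ hf.injective]
  refine sum_bij' (fun f _ => univ.image f)
    (fun t ht => t.orderEmbOfFin (mem_powersetCard.1 ht).2) ?_ ?_ ?_ ?_ ?_
  · intro f hf
    simp [mem_powersetCard, hcard (hmono hf)]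
  · intro t ht
    simp only [mem_filter, mem_univ, true_and]
    exact fun a b h => (t.orderEmbOfFin (mem_powersetCard.1 ht).2).strictMono h
  · intro f hf
    exact (orderEmbOfFin_unique (hcard (hmono hf)) (fun x => mem_image_of_mem f (mem_univ x))
      (hmono hf)).symm
  · intro t ht
    exact coe_injective (by simp)
  · intro f hf
    rw [prod_image fun x _ y _ h => (hmono hf).injective h]

/-- The elementary symmetric sum `∑ x₁⋯x_k` over all strictly increasing
sequences `1 ≤ x₁ < ⋯ < x_k ≤ n` equals `c(n+1, n+1-k)`.  Here a strictly
increasing sequence is encoded as a strictly increasing `f : Fin k → Fin n`,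
with `x_i = f i + 1 ∈ {1,…,n}`. -/
theorem stmt_8 (n k : ℕ) (hk : k ≤ n) :
    ∑ f ∈ Finset.univ.filter (fun f : Fin k → Fin n =>
        ∀ a b : Fin k, a < b → f a < f b),
      ∏ i : Fin k, ((f i : ℕ) + 1) = stirlingCycle (n + 1) (n + 1 - k) := by
  rw [sum_strictMono_prod_eq_sum_powersetCard k (fun x : Fin n => (x : ℕ) + 1),
    stirlingCycle_eq_stirlingFirst, ← ascPochhammer_coeff_eq_stirlingFirst,
    ascPochhammer_succ_eq_X_mul_prod, show n + 1 - k = n - k + 1 by omega, coeff_X_mul,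
    prod_X_add_C_coeff _ _ (by simp), card_univ, Fintype.card_fin, Nat.sub_sub_self hk]
end

section
/- For all natural numbers n and k, the complete homogeneous symmetric sum ∑ x_1·x_2⋯x_k, taken over all weakly increasing integer sequences 1 ≤ x_1 ≤ x_2 ≤ ⋯ ≤ x_k ≤ n (equivalently, over all k-element multisets with elements from {1, 2, …, n}), equals the Stirling subset number S(n+k, n). -/
/-- The Stirling subset number `S(n,k)`: the number of partitions of an
`n`-element set into exactly `k` nonempty subsets. -/
noncomputable def stirlingSubset (n k : ℕ) : ℕ :=
  Nat.card {P : Finset (Finset (Fin n)) //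
    P.card = k ∧ (∀ s ∈ P, s.Nonempty) ∧ ∀ x : Fin n, ∃! s, s ∈ P ∧ x ∈ s}

/-!
Both sides satisfy the recurrence by which Mathlib defines `Nat.stirlingSecond`.
Splitting the weakly increasing sequences according to whether their last term is
the top value gives `h_{k+1}(1, …, n+1) = h_{k+1}(1, …, n) + (n+1) h_k(1, …, n+1)`.
In a partition of `Option α` into `j + 1` blocks, `none` is either a singleton block
or has been added to one of the `j + 1` blocks of a partition of `α`, which gives
`S(m+1, j+1) = S(m, j) + (j+1) S(m, j+1)`.
-/

open Finset

section CompleteHomogeneous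

variable {R : Type*} [CommSemiring R]

open Classical in
def completeHomogeneous {n : ℕ} (k : ℕ) (x : Fin n → R) : R :=
  ∑ f ∈ univ.filter (fun f : Fin k → Fin n => Monotone f), ∏ i, x (f i)

theorem completeHomogeneous_zero {n : ℕ} (x : Fin n → R) : completeHomogeneous 0 x = 1 := by
  simp [completeHomogeneous, Subsingleton.monotone]

theorem completeHomogeneous_succ_of_fin_zero (k : ℕ) (x : Fin 0 → R) :
    completeHomogeneous (k + 1) x = 0 := by
  simp [completeHomogeneous]

theorem monotone_snoc_last_iff {n k : ℕ} {g : Fin k → Fin (n + 1)} :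
    Monotone (Fin.snoc g (Fin.last n) : Fin (k + 1) → Fin (n + 1)) ↔ Monotone g := by
  refine ⟨fun h a b hab => ?_, fun h => ?_⟩
  · simpa using h (Fin.castSucc_le_castSucc_iff.2 hab)
  · intro a b hab
    induction b using Fin.lastCases with
    | last => simp [Fin.le_last]
    | cast b =>
      induction a using Fin.lastCases with
      | last => exact absurd hab (not_le.2 (Fin.castSucc_lt_last b))
      | cast a => simpa using h (Fin.castSucc_le_castSucc_iff.1 hab)

open Classical in
theorem sum_monotone_apply_last_ne {n k : ℕ} (x : Fin (n + 1) → R) :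
    ∑ f ∈ univ.filter (fun f : Fin (k + 1) → Fin (n + 1) =>
        Monotone f ∧ f (Fin.last k) ≠ Fin.last n), ∏ i, x (f i) =
      completeHomogeneous (k + 1) (Fin.init x) := by
  refine sum_bij' (fun f hf a => (f a).castPred ?_) (fun g _ => Fin.castSucc ∘ g) ?_ ?_ ?_ ?_ ?_
  · simp only [mem_filter, mem_univ, true_and] at hf
    exact Fin.ne_last_of_lt (lt_of_le_of_lt (hf.1 (Fin.le_last a)) (Fin.lt_last_iff_ne_last.2 hf.2))
  · intro f hf
    simp only [mem_filter, mem_univ, true_and] at hf ⊢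
    exact fun a b hab => Fin.castPred_le_castPred_iff.2 (hf.1 hab)
  · intro g hg
    simp only [mem_filter, mem_univ, true_and] at hg ⊢
    exact ⟨Fin.strictMono_castSucc.monotone.comp hg, (Fin.castSucc_lt_last _).ne⟩
  · intro f _; funext a; simp
  · intro g _; funext a; simp
  · intro f _; simp [Fin.init]

open Classical in
theorem sum_monotone_apply_last_eq {n k : ℕ} (x : Fin (n + 1) → R) :
    ∑ f ∈ univ.filter (fun f : Fin (k + 1) → Fin (n + 1) =>
        Monotone f ∧ f (Fin.last k) = Fin.last n), ∏ i, x (f i) =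
      x (Fin.last n) * completeHomogeneous k x := by
  rw [completeHomogeneous, mul_sum]
  refine sum_nbij' Fin.init (fun g => Fin.snoc g (Fin.last n)) ?_ ?_ ?_ ?_ ?_
  · intro f hf
    simp only [mem_filter, mem_univ, true_and] at hf ⊢
    exact hf.1.comp Fin.strictMono_castSucc.monotone
  · intro g hg
    simp only [mem_filter, mem_univ, true_and] at hg ⊢
    exact ⟨monotone_snoc_last_iff.2 hg, Fin.snoc_last _ _⟩
  · intro f hf
    simp only [mem_filter, mem_univ, true_and] at hf
    rw [← hf.2, Fin.snoc_init_self]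
  · intro g _; exact Fin.init_snoc _ _
  · intro f hf
    simp only [mem_filter, mem_univ, true_and] at hf
    rw [Fin.prod_univ_castSucc, hf.2, mul_comm]
    rfl

theorem completeHomogeneous_succ_succ {n : ℕ} (k : ℕ) (x : Fin (n + 1) → R) :
    completeHomogeneous (k + 1) x =
      completeHomogeneous (k + 1) (Fin.init x) + x (Fin.last n) * completeHomogeneous k x := by
  classical
  rw [← sum_monotone_apply_last_ne, ← sum_monotone_apply_last_eq, completeHomogeneous,
    ← sum_filter_add_sum_filter_not _ (fun f => f (Fin.last k) = Fin.last n),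
    filter_filter, filter_filter, add_comm]

theorem completeHomogeneous_val_add_one_eq_stirlingSecond (n k : ℕ) :
    completeHomogeneous k (fun i : Fin n => (i : ℕ) + 1) = Nat.stirlingSecond (n + k) n := by
  induction k generalizing n with
  | zero => rw [completeHomogeneous_zero, Nat.add_zero, Nat.stirlingSecond_self]
  | succ k ihk =>
    induction n with
    | zero => rw [completeHomogeneous_succ_of_fin_zero, Nat.zero_add, Nat.stirlingSecond_succ_zero]
    | succ n ihn =>
      have hinit :
          Fin.init (fun i : Fin (n + 1) => (i : ℕ) + 1) = fun i : Fin n => (i : ℕ) + 1 := rfl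
      rw [completeHomogeneous_succ_succ, hinit, ihn, ihk, Fin.val_last,
        show n + 1 + (k + 1) = n + 1 + k + 1 by omega, Nat.stirlingSecond_succ_succ,
        show n + (k + 1) = n + 1 + k by omega, add_comm]

end CompleteHomogeneous

section SetPartition

variable {α β : Type*}

def IsSetPartition (P : Finset (Finset α)) : Prop :=
  (∀ s ∈ P, s.Nonempty) ∧ ∀ x : α, ∃! s, s ∈ P ∧ x ∈ s

abbrev SetPartition (α : Type*) (k : ℕ) :=
  {P : Finset (Finset α) // P.card = k ∧ IsSetPartition P}

namespace IsSetPartition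

variable {P : Finset (Finset α)}

theorem of_cover (hne : ∀ s ∈ P, s.Nonempty) (hcover : ∀ x, ∃ s ∈ P, x ∈ s)
    (heq : ∀ x, ∀ s ∈ P, ∀ t ∈ P, x ∈ s → x ∈ t → s = t) : IsSetPartition P :=
  ⟨hne, fun x => (hcover x).elim fun s hs =>
    ⟨s, hs, fun t ht => heq x t ht.1 s hs.1 ht.2 hs.2⟩⟩

theorem nonempty (hP : IsSetPartition P) {s : Finset α} (hs : s ∈ P) : s.Nonempty := hP.1 s hs

theorem exists_mem (hP : IsSetPartition P) (x : α) : ∃ s ∈ P, x ∈ s :=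
  (hP.2 x).exists

theorem eq_of_mem (hP : IsSetPartition P) {x : α} {s t : Finset α} (hs : s ∈ P) (ht : t ∈ P)
    (hxs : x ∈ s) (hxt : x ∈ t) : s = t :=
  (hP.2 x).unique ⟨hs, hxs⟩ ⟨ht, hxt⟩

theorem empty_notMem (hP : IsSetPartition P) : ∅ ∉ P :=
  fun h => not_nonempty_empty (hP.nonempty h)

theorem map_equiv (hP : IsSetPartition P) (e : α ≃ β) :
    IsSetPartition (P.map e.finsetCongr.toEmbedding) := by
  refine of_cover ?_ (fun y => ?_) ?_
  · simp only [mem_map, forall_exists_index, and_imp]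
    rintro _ s hs rfl
    exact (hP.nonempty hs).map
  · obtain ⟨s, hs, hys⟩ := hP.exists_mem (e.symm y)
    exact ⟨_, mem_map_of_mem _ hs, mem_map_equiv.2 hys⟩
  · simp only [mem_map, forall_exists_index, and_imp]
    rintro y _ s hs rfl _ t ht rfl hys hyt
    rw [hP.eq_of_mem hs ht (mem_map_equiv.1 hys) (mem_map_equiv.1 hyt)]

end IsSetPartition

theorem card_setPartition_congr (e : α ≃ β) (k : ℕ) :
    Nat.card (SetPartition α k) = Nat.card (SetPartition β k) := by
  refine Nat.card_congr (e.finsetCongr.finsetCongr.subtypeEquiv fun P => ?_)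
  rw [Equiv.finsetCongr_apply, card_map]
  refine and_congr_right' ⟨fun h => h.map_equiv e, fun h => ?_⟩
  convert h.map_equiv e.symm
  ext s
  simp [map_map]

section Option

variable [DecidableEq α]

/-- Add `none` to the block `b` of `Q`; for `b = ∅` this adds the new block `{none}`. -/
def extendNone (Q : Finset (Finset α)) (b : Finset α) : Finset (Finset (Option α)) :=
  insert (insertNone b) ((Q.erase b).image (map Function.Embedding.some))

def restrictNone (P : Finset (Finset (Option α))) : Finset (Finset α) :=
  (P.image eraseNone).erase ∅

variable {Q : Finset (Finset α)} {b : Finset α}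

theorem mem_extendNone {t : Finset (Option α)} :
    t ∈ extendNone Q b ↔ t = insertNone b ∨ ∃ u ∈ Q.erase b, u.map .some = t := by
  simp only [extendNone, mem_insert, mem_image]

theorem eq_insertNone_of_none_mem {t : Finset (Option α)} (ht : t ∈ extendNone Q b)
    (hnt : none ∈ t) : t = insertNone b := by
  obtain rfl | ⟨u, -, rfl⟩ := mem_extendNone.1 ht
  · rfl
  · simp at hnt

theorem card_extendNone : (extendNone Q b).card = (Q.erase b).card + 1 := by
  rw [extendNone, card_insert_of_notMem, card_image_of_injective _ (map_injective _)]
  intro h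
  obtain ⟨u, -, hu⟩ := mem_image.1 h
  simpa [← hu] using none_mem_insertNone (s := b)

theorem restrictNone_extendNone (hQ : ∅ ∉ Q) (hb : b = ∅ ∨ b ∈ Q) :
    restrictNone (extendNone Q b) = Q := by
  have himage : (extendNone Q b).image eraseNone = insert b (Q.erase b) := by
    rw [extendNone, image_insert, eraseNone_insertNone, image_image]
    simp [Function.comp_def, eraseNone_map_some]
  rw [restrictNone, himage]
  obtain rfl | hb := hb
  · rw [erase_insert_eq_erase, erase_eq_of_notMem (notMem_erase _ _), erase_eq_of_notMem hQ]
  · rw [insert_erase hb, erase_eq_of_notMem hQ]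

theorem IsSetPartition.extendNone (hQ : IsSetPartition Q) (hb : b = ∅ ∨ b ∈ Q) :
    IsSetPartition (extendNone Q b) := by
  refine .of_cover (fun t ht => ?_) (fun x => ?_) ?_
  · obtain rfl | ⟨u, hu, rfl⟩ := mem_extendNone.1 ht
    · exact insertNone_nonempty
    · exact (hQ.nonempty (mem_of_mem_erase hu)).map
  · cases x with
    | none => exact ⟨_, mem_insert_self _ _, none_mem_insertNone⟩
    | some a =>
      obtain ⟨u, hu, hau⟩ := hQ.exists_mem a
      by_cases hub : u = b
      · exact ⟨insertNone b, mem_insert_self _ _, some_mem_insertNone.2 (hub ▸ hau)⟩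
      · exact ⟨u.map .some, mem_extendNone.2 (.inr ⟨u, mem_erase.2 ⟨hub, hu⟩, rfl⟩),
          by simpa⟩
  · have hdisj : ∀ u ∈ Q.erase b, ∀ a ∈ b, a ∉ u := by
      intro u hu a hab hau
      obtain rfl | hbQ := hb
      · simp at hab
      · exact (mem_erase.1 hu).1 (hQ.eq_of_mem (mem_of_mem_erase hu) hbQ hau hab)
    rintro (_ | a) t ht t' ht' hat hat'
    · rw [eq_insertNone_of_none_mem ht hat, eq_insertNone_of_none_mem ht' hat']
    obtain rfl | ⟨u, hu, rfl⟩ := mem_extendNone.1 ht <;>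
      obtain rfl | ⟨u', hu', rfl⟩ := mem_extendNone.1 ht' <;>
      simp only [some_mem_insertNone, mem_map, Function.Embedding.some_apply, Option.some.injEq,
        exists_eq_right] at hat hat'
    · rfl
    · exact absurd hat' (hdisj u' hu' a hat)
    · exact absurd hat (hdisj u hu a hat')
    · rw [hQ.eq_of_mem (mem_of_mem_erase hu) (mem_of_mem_erase hu') hat hat']

theorem mem_restrictNone {P : Finset (Finset (Option α))} {s : Finset α} :
    s ∈ restrictNone P ↔ s ≠ ∅ ∧ ∃ t ∈ P, eraseNone t = s := by
  simp only [restrictNone, mem_erase, mem_image]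

theorem IsSetPartition.restrictNone {P : Finset (Finset (Option α))} (hP : IsSetPartition P) :
    IsSetPartition (restrictNone P) := by
  refine .of_cover (fun s hs => nonempty_iff_ne_empty.2 (mem_restrictNone.1 hs).1)
    (fun a => ?_) ?_
  · obtain ⟨t, ht, hat⟩ := hP.exists_mem (some a)
    have hat' : a ∈ eraseNone t := mem_eraseNone.2 hat
    exact ⟨eraseNone t, mem_restrictNone.2 ⟨ne_empty_of_mem hat', t, ht, rfl⟩, hat'⟩
  · simp only [mem_restrictNone]
    rintro a _ ⟨-, t, ht, rfl⟩ _ ⟨-, t', ht', rfl⟩ hat hat'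
    rw [hP.eq_of_mem ht ht' (mem_eraseNone.1 hat) (mem_eraseNone.1 hat')]

theorem extendNone_restrictNone {P : Finset (Finset (Option α))} (hP : IsSetPartition P)
    {B : Finset (Option α)} (hB : B ∈ P) (hnB : none ∈ B) :
    extendNone (restrictNone P) (eraseNone B) = P := by
  have hnone : ∀ t ∈ P, none ∈ t → t = B := fun t ht hnt => hP.eq_of_mem ht hB hnt hnB
  ext t
  rw [mem_extendNone, insertNone_eraseNone, insert_eq_of_mem hnB]
  constructor
  · rintro (rfl | ⟨u, hu, rfl⟩)
    · exact hB
    obtain ⟨hub, hu⟩ := mem_erase.1 hu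
    obtain ⟨-, t, ht, rfl⟩ := mem_restrictNone.1 hu
    have hnt : none ∉ t := fun hnt => hub (by rw [hnone t ht hnt])
    rwa [map_some_eraseNone, erase_eq_of_notMem hnt]
  · intro ht
    by_cases htB : t = B
    · exact .inl htB
    have hnt : none ∉ t := fun h => htB (hnone t ht h)
    obtain ⟨a, hat⟩ : ∃ a, some a ∈ t := by
      obtain ⟨_ | a, hx⟩ := hP.nonempty ht
      · exact absurd hx hnt
      · exact ⟨a, hx⟩
    refine .inr ⟨eraseNone t, mem_erase.2 ⟨fun h => htB ?_,
      mem_restrictNone.2 ⟨ne_empty_of_mem (mem_eraseNone.2 hat), t, ht, rfl⟩⟩, ?_⟩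
    · exact hP.eq_of_mem ht hB hat (mem_eraseNone.1 (h ▸ mem_eraseNone.2 hat))
    · rw [map_some_eraseNone, erase_eq_of_notMem hnt]

theorem eq_and_eq_of_extendNone_eq {Q Q' : Finset (Finset α)} {b b' : Finset α} (hQ : ∅ ∉ Q)
    (hQ' : ∅ ∉ Q') (h : extendNone Q b = extendNone Q' b') (hb : b = ∅ ∨ b ∈ Q)
    (hb' : b' = ∅ ∨ b' ∈ Q') :
    Q = Q' ∧ b = b' := by
  refine ⟨by rw [← restrictNone_extendNone hQ hb, h, restrictNone_extendNone hQ' hb'], ?_⟩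
  have hmem : insertNone b ∈ extendNone Q' b' := h ▸ mem_insert_self _ _
  exact insertNone.injective (eq_insertNone_of_none_mem hmem none_mem_insertNone)

namespace SetPartition

variable {j : ℕ}

def extend :
    SetPartition α j ⊕ (Σ Q : SetPartition α (j + 1), Q.1) → SetPartition (Option α) (j + 1)
  | .inl Q => ⟨extendNone Q.1 ∅,
      by rw [card_extendNone, erase_eq_of_notMem Q.2.2.empty_notMem, Q.2.1],
      Q.2.2.extendNone (.inl rfl)⟩
  | .inr ⟨Q, b⟩ => ⟨extendNone Q.1 b,
      by rw [card_extendNone, card_erase_add_one b.2, Q.2.1],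
      Q.2.2.extendNone (.inr b.2)⟩

theorem extend_injective : Function.Injective (extend (α := α) (j := j)) := by
  rintro (Q | ⟨Q, b⟩) (Q' | ⟨Q', b'⟩) h <;>
    have eq_and_eq := eq_and_eq_of_extendNone_eq Q.2.2.empty_notMem Q'.2.2.empty_notMem
      (h := congrArg Subtype.val h)
  · exact congrArg Sum.inl (Subtype.ext (eq_and_eq (.inl rfl) (.inl rfl)).1)
  · exact absurd ((eq_and_eq (.inl rfl) (.inr b'.2)).2 ▸ b'.2) Q'.2.2.empty_notMem
  · exact absurd ((eq_and_eq (.inr b.2) (.inl rfl)).2 ▸ b.2) Q.2.2.empty_notMem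
  · obtain ⟨hQ, hb⟩ := eq_and_eq (.inr b.2) (.inr b'.2)
    obtain rfl : Q = Q' := Subtype.ext hQ
    obtain rfl : b = b' := Subtype.ext hb
    rfl

theorem extend_surjective : Function.Surjective (extend (α := α) (j := j)) := by
  rintro ⟨P, hcard, hP⟩
  obtain ⟨B, hB, hnB⟩ := hP.exists_mem none
  have hPQ := extendNone_restrictNone hP hB hnB
  have hcardQ := card_extendNone (Q := restrictNone P) (b := eraseNone B)
  rw [hPQ, hcard] at hcardQ
  by_cases hb : eraseNone B = ∅
  · rw [hb, erase_eq_of_notMem hP.restrictNone.empty_notMem] at hcardQ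
    exact ⟨.inl ⟨restrictNone P, by omega, hP.restrictNone⟩, Subtype.ext (hb ▸ hPQ)⟩
  · have hbQ : eraseNone B ∈ restrictNone P := mem_restrictNone.2 ⟨hb, B, hB, rfl⟩
    rw [card_erase_of_mem hbQ] at hcardQ
    have hcardQ' : (restrictNone P).card = j + 1 := by
      have := card_pos.2 ⟨_, hbQ⟩
      omega
    exact ⟨.inr ⟨⟨restrictNone P, hcardQ', hP.restrictNone⟩, eraseNone B, hbQ⟩,
      Subtype.ext hPQ⟩

end SetPartition

end Option

end SetPartition

theorem card_setPartition_option_succ (α : Type*) [Finite α] (j : ℕ) :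
    Nat.card (SetPartition (Option α) (j + 1)) =
      Nat.card (SetPartition α j) + (j + 1) * Nat.card (SetPartition α (j + 1)) := by
  classical
  rw [← Nat.card_congr (Equiv.ofBijective _ ⟨SetPartition.extend_injective,
      SetPartition.extend_surjective⟩), Nat.card_sum,
    Nat.card_congr ((Equiv.sigmaCongrRight fun Q : SetPartition α (j + 1) =>
      equivFinOfCardEq Q.2.1).trans (Equiv.sigmaEquivProd _ _)),
    Nat.card_prod, Nat.card_fin, mul_comm]

theorem card_setPartition_zero_of_isEmpty (α : Type*) [IsEmpty α] :
    Nat.card (SetPartition α 0) = 1 := by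
  refine Nat.card_eq_one_iff_exists.2 ⟨⟨∅, card_empty, by simp, isEmptyElim⟩, fun P => ?_⟩
  exact Subtype.ext (card_eq_zero.1 P.2.1)

theorem isEmpty_setPartition_succ_of_isEmpty (α : Type*) [IsEmpty α] (k : ℕ) :
    IsEmpty (SetPartition α (k + 1)) := by
  refine ⟨fun ⟨P, hcard, hP⟩ => ?_⟩
  obtain ⟨s, hs⟩ := (card_pos (s := P)).1 (by omega)
  exact isEmptyElim (hP.nonempty hs).choose

theorem isEmpty_setPartition_zero (α : Type*) [Nonempty α] : IsEmpty (SetPartition α 0) := by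
  refine ⟨fun ⟨P, hcard, hP⟩ => ?_⟩
  obtain ⟨s, hs, -⟩ := hP.exists_mem (Classical.arbitrary α)
  exact notMem_empty s (card_eq_zero.1 hcard ▸ hs)

theorem card_setPartition (α : Type*) [Finite α] (k : ℕ) :
    Nat.card (SetPartition α k) = Nat.stirlingSecond (Nat.card α) k := by
  have := Fintype.ofFinite α
  revert k
  refine Fintype.induction_empty_option
    (P := fun α _ => ∀ k, Nat.card (SetPartition α k) = Nat.stirlingSecond (Nat.card α) k)
    (fun α β _ e ih k => ?_) (fun k => ?_) (fun α _ ih k => ?_) α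
  · rw [← card_setPartition_congr e, ih, Nat.card_congr e]
  · rw [Nat.card_of_isEmpty (α := PEmpty)]
    cases k with
    | zero => exact card_setPartition_zero_of_isEmpty _
    | succ k => exact @Nat.card_of_isEmpty _ (isEmpty_setPartition_succ_of_isEmpty _ k)
  · rw [Finite.card_option]
    cases k with
    | zero => exact @Nat.card_of_isEmpty _ (isEmpty_setPartition_zero _)
    | succ k =>
      rw [card_setPartition_option_succ, ih, ih, Nat.stirlingSecond_succ_succ, add_comm]

theorem stirlingSubset_eq_stirlingSecond (n k : ℕ) :
    stirlingSubset n k = Nat.stirlingSecond n k :=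
  (card_setPartition (Fin n) k).trans (by rw [Nat.card_fin])

/-- The complete homogeneous symmetric sum `∑ x₁⋯x_k` over all weakly increasing
sequences `1 ≤ x₁ ≤ ⋯ ≤ x_k ≤ n` equals `S(n+k, n)`.  Here a weakly increasing
sequence is encoded as a monotone `f : Fin k → Fin n`, with `x_i = f i + 1 ∈ {1,…,n}`. -/
theorem stmt_9 (n k : ℕ) :
    ∑ f ∈ Finset.univ.filter (fun f : Fin k → Fin n =>
        ∀ a b : Fin k, a ≤ b → f a ≤ f b),
      ∏ i : Fin k, ((f i : ℕ) + 1) = stirlingSubset (n + k) n := by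
  classical
  calc _ = completeHomogeneous k (fun i : Fin n => (i : ℕ) + 1) :=
        sum_congr (filter_congr fun f _ => ⟨fun h _ _ hab => h _ _ hab, fun h _ _ hab => h hab⟩)
          fun _ _ => rfl
    _ = Nat.stirlingSecond (n + k) n := completeHomogeneous_val_add_one_eq_stirlingSecond n k
    _ = stirlingSubset (n + k) n := (stirlingSubset_eq_stirlingSecond _ _).symm
end

section
/- For every natural number k there exist polynomials p_k and q_k in ℚ[X] such that for every natural number n, p_k(n) = ∑_{1 ≤ x_1 < x_2 < ⋯ < x_k ≤ n} x_1·x_2⋯x_k and q_k(n) = ∑_{1 ≤ x_1 ≤ x_2 ≤ ⋯ ≤ x_k ≤ n} x_1·x_2⋯x_k; both p_k and q_k have degree 2k, and they satisfy the polynomial identity p_k(X−1) = q_k(−X) in ℚ[X]. -/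
/-!
Removing the largest factor `x_k = m + 1` gives `C_{k+1}(n) = ∑_{m<n} (m + 1) C_k(m)` and
`Γ_{k+1}(n) = ∑_{m<n} (m + 1) Γ_k(m + 1)`. Hence `p_{k+1}` and `q_{k+1}` are antidifferences of
`(X + 1) p_k` and `(X + 1) q_k(X + 1)`; antidifferences exist by Faulhaber's formula and raise the
degree by one, since the `d`-th forward difference of a degree-`d` polynomial is the nonzero
constant `d! · lead`. For the duality, `D(x) = p_{k+1}(x - 1) - q_{k+1}(-x)` satisfies
`D(x + 1) - D(x) = x (p_k(x - 1) - q_k(-x)) = 0` and `D(0) = 0`, so `D` vanishes on `ℕ`.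
-/

open Polynomial Finset Fintype
open scoped fwdDiff

namespace Polynomial

theorem eval_natCast_eq_sum_range_of_fwdDiff_eval_eq {R : Type*} [CommRing R] {s r : R[X]}
    (h : Δ_[1] s.eval = r.eval) (n : ℕ) :
    s.eval (n : R) = s.eval 0 + ∑ m ∈ range n, r.eval (m : R) := by
  have telescope := sum_range_sub (fun m : ℕ => s.eval (m : R)) n
  push_cast at telescope
  simp only [← congrFun h, fwdDiff, telescope]
  ring

section CharZero

variable {R : Type*} [CommRing R] [IsDomain R] [CharZero R]

theorem eq_of_eval_natCast_eq {p q : R[X]} (h : ∀ n : ℕ, p.eval (n : R) = q.eval (n : R)) :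
    p = q :=
  eq_of_infinite_eval_eq p q <| (Set.infinite_range_of_injective Nat.cast_injective).mono <| by
    rintro _ ⟨n, rfl⟩
    exact h n

theorem fwdDiff_iter_natDegree_ne_zero {P : R[X]} (hP : P ≠ 0) :
    (Δ_[1])^[P.natDegree] P.eval ≠ 0 := by
  rw [fwdDiff_iter_degree_eq_factorial]
  intro h
  simpa [hP, Nat.factorial_ne_zero] using congrFun h 0

theorem natDegree_eq_of_fwdDiff_eval_eq {s r : R[X]} (h : Δ_[1] s.eval = r.eval) (hr : r ≠ 0) :
    s.natDegree = r.natDegree + 1 := by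
  have iterate_succ (j : ℕ) : (Δ_[1])^[j + 1] s.eval = (Δ_[1])^[j] r.eval := by
    rw [Function.iterate_succ_apply, h]
  have lower : r.natDegree < s.natDegree := by
    by_contra! hle
    refine fwdDiff_iter_natDegree_ne_zero hr ?_
    rw [← iterate_succ]
    exact fwdDiff_iter_eq_zero_of_degree_lt (by omega)
  have upper : s.natDegree < r.natDegree + 2 := by
    by_contra! hle
    obtain ⟨j, hj⟩ : ∃ j, s.natDegree = j + 1 := ⟨s.natDegree - 1, by omega⟩
    refine fwdDiff_iter_natDegree_ne_zero (P := s) (by rintro rfl; simp at hj) ?_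
    rw [hj, iterate_succ]
    exact fwdDiff_iter_eq_zero_of_degree_lt (by omega)
  omega

theorem comp_X_sub_one_eq_comp_neg_X_of_fwdDiff {p q p' q' : R[X]}
    (hpq : p.comp (X - 1) = q.comp (-X))
    (hp' : Δ_[1] p'.eval = fun x => (x + 1) * p.eval x)
    (hq' : Δ_[1] q'.eval = fun x => (x + 1) * q.eval (x + 1))
    (hp'0 : p'.eval 0 = 0) (hq'0 : q'.eval 0 = 0) :
    p'.comp (X - 1) = q'.comp (-X) := by
  have hp'_step (x : R) : p'.eval x - p'.eval (x - 1) = x * p.eval (x - 1) := by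
    simpa [fwdDiff] using congrFun hp' (x - 1)
  have hq'_step (x : R) : q'.eval (-x) - q'.eval (-x - 1) = -x * q.eval (-x) := by
    simpa [fwdDiff] using congrFun hq' (-x - 1)
  have hpq_eval (x : R) : p.eval (x - 1) = q.eval (-x) := by
    simpa using congr(eval x $hpq)
  refine eq_of_eval_natCast_eq fun n => ?_
  simp only [eval_comp, eval_sub, eval_neg, eval_X, eval_one]
  induction n with
  | zero => simpa [hp'0, hq'0] using hp'_step 0
  | succ n ih =>
    push_cast
    rw [add_sub_cancel_right, neg_add']
    linear_combination ih + hp'_step n + hq'_step n + n * hpq_eval n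

end CharZero

theorem exists_fwdDiff_eval_eq (r : ℚ[X]) :
    ∃ s : ℚ[X], Δ_[1] s.eval = r.eval ∧ s.eval 0 = 0 := by
  induction r using Polynomial.induction_on' with
  | add r₁ r₂ h₁ h₂ =>
    obtain ⟨s₁, hs₁, hs₁0⟩ := h₁
    obtain ⟨s₂, hs₂, hs₂0⟩ := h₂
    refine ⟨s₁ + s₂, ?_, by simp [hs₁0, hs₂0]⟩
    funext x
    have h₁ := congrFun hs₁ x
    have h₂ := congrFun hs₂ x
    simp only [fwdDiff, eval_add] at h₁ h₂ ⊢
    linear_combination h₁ + h₂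
  | monomial i a =>
    -- Faulhaber: `B_{i+1}(x + 1) - B_{i+1}(x) = (i + 1) x ^ i`
    refine ⟨C (a / (i + 1)) * (bernoulli (i + 1) - C (_root_.bernoulli (i + 1))), ?_,
      by simp [bernoulli_eval_zero]⟩
    funext x
    simp only [fwdDiff, add_comm x 1, eval_mul, eval_C, eval_sub, bernoulli_eval_one_add,
      Nat.cast_add, Nat.cast_one, add_tsub_cancel_right, eval_monomial]
    field_simp
    ring

end Polynomial

theorem Fin.forall_lt_imp_snoc_iff {α : Type*} {k : ℕ} (r : α → α → Prop)
    (g : Fin k → α) (y : α) :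
    (∀ a b : Fin (k + 1), a < b →
      r (Fin.snoc (α := fun _ => α) g y a) (Fin.snoc (α := fun _ => α) g y b)) ↔
      (∀ a b : Fin k, a < b → r (g a) (g b)) ∧ ∀ i, r (g i) y := by
  simp [Fin.forall_fin_succ', Fin.castSucc_lt_last, forall_and, (Fin.le_last _).not_gt]

section Kramp

variable (r : ℕ → ℕ → Prop) [DecidableRel r]

/-- `krampSum (· < ·) k n = C_k(n)` and `krampSum (· ≤ ·) k n = Γ_k(n)`, reading `f i` as
`x_{i+1} - 1`. -/
def krampSum (k n : ℕ) : ℕ :=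
  ∑ f ∈ piFinset (fun _ : Fin k => range n) with ∀ a b, a < b → r (f a) (f b),
    ∏ i, (f i + 1)

theorem krampSum_zero (n : ℕ) : krampSum r 0 n = 1 := by
  simp [krampSum]

theorem krampSum_succ (k n : ℕ) :
    krampSum r (k + 1) n = ∑ y ∈ range n, (y + 1) *
      ∑ g ∈ piFinset (fun _ : Fin k => range n) with
        (∀ a b, a < b → r (g a) (g b)) ∧ ∀ i, r (g i) y, ∏ i, (g i + 1) := by
  calc krampSum r (k + 1) n
      = ∑ x ∈ range n ×ˢ piFinset (fun _ : Fin k => range n) with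
          ∀ a b, a < b →
            r (Fin.snoc (α := fun _ => ℕ) x.2 x.1 a) (Fin.snoc (α := fun _ => ℕ) x.2 x.1 b),
        (x.1 + 1) * ∏ i, (x.2 i + 1) := by
        refine sum_equiv (Fin.snocEquiv fun _ => ℕ).symm (fun f => ?_) (fun f _ => ?_)
        · simp [Fin.forall_fin_succ', Fin.init, and_comm]
        · simp [Fin.prod_univ_castSucc, Fin.init, mul_comm]
    _ = _ := by
        simp_rw [sum_filter, sum_product, mul_sum, Fin.forall_lt_imp_snoc_iff, mul_ite, mul_zero]

theorem filter_piFinset_range_of_forall_iff_lt {k n m y : ℕ} (hm : m ≤ n)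
    (hy : ∀ x, r x y ↔ x < m) :
    {g ∈ piFinset (fun _ : Fin k => range n) |
        (∀ a b, a < b → r (g a) (g b)) ∧ ∀ i, r (g i) y} =
      {g ∈ piFinset (fun _ : Fin k => range m) | ∀ a b, a < b → r (g a) (g b)} := by
  ext g
  simp only [mem_filter, mem_piFinset, mem_range, hy]
  exact ⟨fun ⟨_, hc, hb⟩ => ⟨hb, hc⟩,
    fun ⟨hb, hc⟩ => ⟨fun i => (hb i).trans_le hm, hc, hb⟩⟩

end Kramp

theorem krampSum_lt_succ (k n : ℕ) :
    krampSum (· < ·) (k + 1) n = ∑ m ∈ range n, (m + 1) * krampSum (· < ·) k m := by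
  rw [krampSum_succ]
  refine sum_congr rfl fun m hm => ?_
  rw [filter_piFinset_range_of_forall_iff_lt _ (mem_range.1 hm).le fun _ => Iff.rfl, krampSum]

theorem krampSum_le_succ (k n : ℕ) :
    krampSum (· ≤ ·) (k + 1) n =
      ∑ m ∈ range n, (m + 1) * krampSum (· ≤ ·) k (m + 1) := by
  rw [krampSum_succ]
  refine sum_congr rfl fun m hm => ?_
  rw [filter_piFinset_range_of_forall_iff_lt _ (mem_range.1 hm) fun _ => Nat.lt_succ_iff.symm,
    krampSum]

theorem sum_filter_univ_fin_eq_sum_filter_piFinset {M : Type*} [AddCommMonoid M] {k n : ℕ}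
    (P : (Fin k → ℕ) → Prop) [DecidablePred P] (F : (Fin k → ℕ) → M) :
    ∑ f ∈ univ.filter (fun f : Fin k → Fin n => P fun i => f i), F (fun i => f i) =
      ∑ g ∈ piFinset (fun _ => range n) with P g, F g := by
  refine sum_bij' (fun f _ i => f i)
    (fun g hg i => ⟨g i, mem_range.1 (mem_piFinset.1 (mem_filter.1 hg).1 i)⟩)
    (fun f hf => ?_) (fun g hg => ?_) (fun _ _ => rfl) (fun _ _ => rfl) (fun _ _ => rfl)
  · simpa [mem_piFinset] using hf
  · simpa using (mem_filter.1 hg).2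

theorem krampSum_lt_eq (k n : ℕ) :
    krampSum (· < ·) k n = ∑ f ∈ univ.filter (fun f : Fin k → Fin n =>
      ∀ a b : Fin k, a < b → f a < f b), ∏ i : Fin k, ((f i : ℕ) + 1) :=
  (sum_filter_univ_fin_eq_sum_filter_piFinset (fun g => ∀ a b, a < b → g a < g b)
    fun g => ∏ i, (g i + 1)).symm

theorem krampSum_le_eq (k n : ℕ) :
    krampSum (· ≤ ·) k n = ∑ f ∈ univ.filter (fun f : Fin k → Fin n =>
      ∀ a b : Fin k, a ≤ b → f a ≤ f b), ∏ i : Fin k, ((f i : ℕ) + 1) := by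
  rw [krampSum, ← sum_filter_univ_fin_eq_sum_filter_piFinset]
  refine sum_congr (filter_congr fun f _ => ?_) fun _ _ => rfl
  exact monotone_iff_forall_lt.symm

theorem exists_krampSum_polynomials (k : ℕ) :
    ∃ p q : ℚ[X],
      (∀ n : ℕ, p.eval (n : ℚ) = krampSum (· < ·) k n) ∧
      (∀ n : ℕ, q.eval (n : ℚ) = krampSum (· ≤ ·) k n) ∧
      p.natDegree = 2 * k ∧ q.natDegree = 2 * k ∧ p ≠ 0 ∧ q ≠ 0 ∧
      p.comp (X - 1) = q.comp (-X) := by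
  induction k with
  | zero => exact ⟨1, 1, by simp [krampSum_zero], by simp [krampSum_zero], by simp, by simp,
      one_ne_zero, one_ne_zero, by simp⟩
  | succ k ih =>
    obtain ⟨p, q, hp, hq, hp_deg, hq_deg, hp0, hq0, hpq⟩ := ih
    have hX : (X + 1 : ℚ[X]) ≠ 0 := by simpa using X_add_C_ne_zero (1 : ℚ)
    have hX_deg : (X + 1 : ℚ[X]).natDegree = 1 := by simpa using natDegree_X_add_C (1 : ℚ)
    have hq_shift : q.comp (X + 1) ≠ 0 := by
      simpa using (comp_X_add_C_ne_zero_iff (t := 1)).2 hq0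
    obtain ⟨p', hp', hp'0⟩ := exists_fwdDiff_eval_eq ((X + 1) * p)
    obtain ⟨q', hq', hq'0⟩ := exists_fwdDiff_eval_eq ((X + 1) * q.comp (X + 1))
    have hp'_deg : p'.natDegree = 2 * (k + 1) := by
      rw [natDegree_eq_of_fwdDiff_eval_eq hp' (mul_ne_zero hX hp0), natDegree_mul hX hp0, hX_deg,
        hp_deg]
      ring
    have hq'_deg : q'.natDegree = 2 * (k + 1) := by
      rw [natDegree_eq_of_fwdDiff_eval_eq hq' (mul_ne_zero hX hq_shift),
        natDegree_mul hX hq_shift, natDegree_comp, hX_deg, hq_deg]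
      ring
    refine ⟨p', q', fun n => ?_, fun n => ?_, hp'_deg, hq'_deg,
      ne_zero_of_natDegree_gt (n := 0) (by omega), ne_zero_of_natDegree_gt (n := 0) (by omega),
      comp_X_sub_one_eq_comp_neg_X_of_fwdDiff hpq (by simpa using hp') (by simpa using hq')
        hp'0 hq'0⟩
    · rw [eval_natCast_eq_sum_range_of_fwdDiff_eval_eq hp', hp'0, zero_add, krampSum_lt_succ]
      push_cast
      simp [hp]
    · rw [eval_natCast_eq_sum_range_of_fwdDiff_eval_eq hq', hq'0, zero_add, krampSum_le_succ]
      push_cast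
      simp [← hq]

/-- Kramp's sums of products `C_k(n)` (without repetition) and `Γ_k(n)` (with
repetition) are given by polynomials `p_k, q_k ∈ ℚ[X]` of degree `2k`, and these
polynomials satisfy the duality identity `p_k(X-1) = q_k(-X)`.  Strictly
(resp. weakly) increasing sequences `1 ≤ x₁ < ⋯ < x_k ≤ n`
(resp. `1 ≤ x₁ ≤ ⋯ ≤ x_k ≤ n`) are encoded as strictly increasing
(resp. monotone) functions `f : Fin k → Fin n`, with `x_i = f i + 1`. -/
theorem stmt_10 (k : ℕ) :
    ∃ p q : Polynomial ℚ,
      (∀ n : ℕ, p.eval (n : ℚ) =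
        ((∑ f ∈ Finset.univ.filter (fun f : Fin k → Fin n =>
            ∀ a b : Fin k, a < b → f a < f b),
          ∏ i : Fin k, ((f i : ℕ) + 1) : ℕ) : ℚ)) ∧
      (∀ n : ℕ, q.eval (n : ℚ) =
        ((∑ f ∈ Finset.univ.filter (fun f : Fin k → Fin n =>
            ∀ a b : Fin k, a ≤ b → f a ≤ f b),
          ∏ i : Fin k, ((f i : ℕ) + 1) : ℕ) : ℚ)) ∧
      p.natDegree = 2 * k ∧ q.natDegree = 2 * k ∧
      p.comp (Polynomial.X - 1) = q.comp (-Polynomial.X) := by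
  obtain ⟨p, q, hp, hq, hp_deg, hq_deg, -, -, hpq⟩ := exists_krampSum_polynomials k
  exact ⟨p, q, fun n => by rw [hp, krampSum_lt_eq], fun n => by rw [hq, krampSum_le_eq],
    hp_deg, hq_deg, hpq⟩
end

section
/- There exists exactly one function f : ℤ × ℤ → ℤ satisfying the recurrence f(n+1,k) = n·f(n,k) + f(n,k−1) for all integers n and k, together with the boundary conditions f(0,k) = [k = 0] for all integers k and f(n,0) = [n = 0] for all integers n. Moreover, this unique f satisfies: for all natural numbers n and k, f(n,k) = c(n,k) and f(−k,−n) = S(n,k). -/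
/-- Stirling cycle numbers, recursively. -/
def cyc : ℕ → ℕ → ℕ
  | 0, 0 => 1
  | 0, _ + 1 => 0
  | n + 1, 0 => n * cyc n 0
  | n + 1, k + 1 => n * cyc n (k + 1) + cyc n k

/-- Stirling subset numbers, recursively. -/
def subs : ℕ → ℕ → ℕ
  | 0, 0 => 1
  | 0, _ + 1 => 0
  | _ + 1, 0 => 0
  | n + 1, k + 1 => (k + 1) * subs n (k + 1) + subs n k

/-- The doubly-infinite Stirling array. -/
noncomputable def F (p : ℤ × ℤ) : ℤ :=
  if 0 ≤ p.1 then (if 0 ≤ p.2 then cyc p.1.toNat p.2.toNat else 0)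
  else if p.2 ≤ 0 then subs (-p.2).toNat (-p.1).toNat else 0

lemma F_pos {n k : ℤ} (hn : 0 ≤ n) (hk : 0 ≤ k) : F (n, k) = cyc n.toNat k.toNat := by
  simp [F, hn, hk]

lemma F_mix1 {n k : ℤ} (hn : 0 ≤ n) (hk : k < 0) : F (n, k) = 0 := by
  simp [F, hn, not_le.2 hk]

lemma F_neg {n k : ℤ} (hn : n < 0) (hk : k ≤ 0) : F (n, k) = subs (-k).toNat (-n).toNat := by
  simp [F, not_le.2 hn, hk]

lemma F_mix2 {n k : ℤ} (hn : n < 0) (hk : 0 < k) : F (n, k) = 0 := by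
  simp [F, not_le.2 hn, not_le.2 hk]

lemma subs_zero_right : ∀ n, subs n 0 = if n = 0 then 1 else 0
  | 0 => rfl
  | _ + 1 => rfl

lemma subs_zero_left : ∀ k, subs 0 k = if k = 0 then 1 else 0
  | 0 => rfl
  | _ + 1 => rfl

lemma cyc_zero_left : ∀ k, cyc 0 k = if k = 0 then 1 else 0
  | 0 => rfl
  | _ + 1 => rfl

lemma cyc_zero_right : ∀ n, cyc n 0 = if n = 0 then 1 else 0
  | 0 => rfl
  | n + 1 => by
    show n * cyc n 0 = _
    rw [cyc_zero_right n]
    rcases Nat.eq_zero_or_pos n with h | h <;> simp [h]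

lemma subs_one_left : ∀ k, subs 1 k = if k = 1 then 1 else 0
  | 0 => rfl
  | k + 1 => by
    show (k+1) * subs 0 (k+1) + subs 0 k = _
    rw [subs_zero_left, subs_zero_left]
    rcases Nat.eq_zero_or_pos k with h | h <;> simp [h] <;> omega

lemma subs_one : ∀ n, subs n 1 = if n = 0 then 0 else 1
  | 0 => rfl
  | 1 => rfl
  | n + 2 => by
    show 1 * subs (n+1) 1 + subs (n+1) 0 = _
    rw [subs_one (n+1), subs_zero_right]
    simp

lemma F_boundary_k (k : ℤ) : F (0, k) = if k = 0 then 1 else 0 := by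
  rcases lt_trichotomy k 0 with h | h | h
  · rw [F_mix1 le_rfl h, if_neg (by omega)]
  · subst h; rw [F_pos le_rfl le_rfl]; rfl
  · rw [F_pos le_rfl h.le]
    simp only [Int.toNat_zero, cyc_zero_left]
    rw [if_neg (by omega), if_neg (by omega)]
    rfl

lemma F_boundary_n (n : ℤ) : F (n, 0) = if n = 0 then 1 else 0 := by
  rcases lt_trichotomy n 0 with h | h | h
  · rw [F_neg h le_rfl]
    simp only [neg_zero, Int.toNat_zero, subs_zero_left]
    rw [if_neg (by omega), if_neg (by omega)]
    rfl
  · subst h; rw [F_pos le_rfl le_rfl]; rfl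
  · rw [F_pos h.le le_rfl]
    simp only [Int.toNat_zero, cyc_zero_right]
    rw [if_neg (by omega), if_neg (by omega)]
    rfl

lemma F_recur (n k : ℤ) : F (n + 1, k) = n * F (n, k) + F (n, k - 1) := by
  rcases le_or_gt 0 n with hn | hn
  · rcases lt_trichotomy k 0 with hk | hk | hk
    · rw [F_mix1 (by omega) hk, F_mix1 hn hk, F_mix1 hn (by omega)]; ring
    · subst hk
      rw [F_pos (by omega) le_rfl, F_pos hn le_rfl, F_mix1 hn (by omega)]
      have h1 : (n+1).toNat = n.toNat + 1 := by omega
      rw [h1]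
      show ((cyc (n.toNat + 1) (0:ℤ).toNat : ℤ)) = _
      have : cyc (n.toNat + 1) 0 = n.toNat * cyc n.toNat 0 := rfl
      simp only [Int.toNat_zero, this]
      push_cast
      rw [Int.toNat_of_nonneg hn]
      try ring
    · rw [F_pos (by omega) hk.le, F_pos hn hk.le, F_pos hn (by omega)]
      have h1 : (n+1).toNat = n.toNat + 1 := by omega
      have h2 : k.toNat = (k-1).toNat + 1 := by omega
      rw [h1, h2]
      have : cyc (n.toNat + 1) ((k-1).toNat + 1)
          = n.toNat * cyc n.toNat ((k-1).toNat + 1) + cyc n.toNat (k-1).toNat := rfl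
      rw [this]; push_cast; rw [Int.toNat_of_nonneg hn, ← h2]; try ring
  · rcases lt_trichotomy k 0 with hk | hk | hk
    · rcases eq_or_lt_of_le (by omega : n + 1 ≤ 0) with h0 | h0
      · -- n = -1, so n+1 = 0
        have hn1 : n = -1 := by omega
        subst hn1
        rw [show (-1 : ℤ) + 1 = 0 by ring, F_boundary_k, F_neg (by omega) hk.le,
          F_neg (by omega) (by omega), if_neg (by omega)]
        have e2 : (-(k-1)).toNat = (-k).toNat + 1 := by omega
        have e3 : ((- -1 : ℤ)).toNat = 1 := by norm_num
        rw [e2, e3, subs_one, subs_one, if_neg (by omega), if_neg (by omega)]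
        ring
      · rw [F_neg (by omega) hk.le, F_neg hn hk.le, F_neg hn (by omega)]
        set a := (-k).toNat with ha
        set b := (-(n+1)).toNat with hb
        have e2 : (-(k-1)).toNat = a + 1 := by omega
        have e5 : (-n).toNat = b + 1 := by omega
        rw [e2, e5]
        have : subs (a + 1) (b + 1) = (b+1) * subs a (b+1) + subs a b := rfl
        rw [this]
        have hnb : (n : ℤ) = -((b:ℤ)+1) := by omega
        rw [hnb]
        push_cast
        ring
    · subst hk
      rw [F_boundary_n, F_boundary_n, F_neg hn (by omega)]
      have e2 : (-((0:ℤ)-1)).toNat = 1 := by norm_num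
      rw [e2, subs_one_left]
      by_cases h1 : n = -1
      · subst h1; norm_num
      · rw [if_neg (by omega), if_neg (by omega), if_neg (by omega)]; ring
    · rcases eq_or_lt_of_le (by omega : n + 1 ≤ 0) with h0 | h0
      · have hn1 : n = -1 := by omega
        subst hn1
        rw [show (-1 : ℤ) + 1 = 0 by ring, F_boundary_k, F_mix2 (by omega) hk,
          if_neg (by omega)]
        rcases eq_or_lt_of_le (by omega : (1:ℤ) ≤ k) with h1 | h1
        · rw [← h1, F_neg (by omega) (by omega)]
          norm_num [subs_zero_left]
        · rw [F_mix2 (by omega) (by omega)]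
          ring
      · rw [F_mix2 h0 hk, F_mix2 hn hk]
        rcases eq_or_lt_of_le (by omega : (1:ℤ) ≤ k) with h1 | h1
        · rw [← h1, F_neg hn (by omega)]
          norm_num [subs_zero_left]
          omega
        · rw [F_mix2 hn (by omega)]
          ring

lemma F_unique (f : ℤ × ℤ → ℤ)
    (hrec : ∀ n k : ℤ, f (n + 1, k) = n * f (n, k) + f (n, k - 1))
    (hbk : ∀ k : ℤ, f (0, k) = if k = 0 then 1 else 0)
    (hbn : ∀ n : ℤ, f (n, 0) = if n = 0 then 1 else 0) :
    f = F := by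
  have key : ∀ g : ℤ × ℤ → ℤ,
      (∀ n k : ℤ, g (n + 1, k) = n * g (n, k) + g (n, k - 1)) →
      (∀ k : ℤ, g (0, k) = 0) → (∀ n : ℤ, g (n, 0) = 0) → ∀ p, g p = 0 := by
    intro g grec gk gn p
    obtain ⟨n, k⟩ := p
    rcases le_or_gt 0 n with hn | hn
    · have H : ∀ m : ℕ, ∀ k : ℤ, g (m, k) = 0 := by
        intro m
        induction m with
        | zero => intro k; exact_mod_cast gk k
        | succ m ih =>
          intro k
          have := grec m k
          push_cast at this ⊢
          rw [this, ih k, ih (k-1)]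
          ring
      have he : n = (n.toNat : ℤ) := by omega
      rw [he]; exact H n.toNat k
    · have H : ∀ m : ℕ, ∀ k : ℤ, g (-(m+1 : ℕ), k) = 0 := by
        intro m
        induction m with
        | zero =>
          have row : ∀ k : ℤ, g (-1, k - 1) = g (-1, k) := by
            intro k
            have h := grec (-1) k
            rw [show (-1 : ℤ) + 1 = 0 by ring, gk k] at h
            linarith
          have up : ∀ j : ℕ, g (-1, (j:ℤ)) = 0 := by
            intro j; induction j with
            | zero => exact_mod_cast gn (-1)
            | succ j ih =>
              have h := row ((j:ℤ)+1)
              rw [show ((j:ℤ)+1-1) = (j:ℤ) by ring, ih] at h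
              push_cast
              linarith
          have down : ∀ j : ℕ, g (-1, -(j:ℤ)) = 0 := by
            intro j; induction j with
            | zero => exact_mod_cast gn (-1)
            | succ j ih =>
              have h := row (-(j:ℤ))
              rw [ih] at h
              push_cast
              rw [show (-((j:ℤ)+1)) = -(j:ℤ) - 1 by ring]
              linarith
          intro k
          push_cast
          rcases le_or_gt 0 k with h | h
          · rw [show k = (k.toNat : ℤ) by omega]; exact up k.toNat
          · rw [show k = -((-k).toNat : ℤ) by omega]; exact down (-k).toNat
        | succ m ih =>
          have row : ∀ k : ℤ, g (-(m+2:ℕ), k - 1) = ((m:ℤ)+2) * g (-(m+2:ℕ), k) := by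
            intro k
            have h := grec (-(m+2:ℕ)) k
            rw [show (-(m+2:ℕ) : ℤ) + 1 = -(m+1:ℕ) by push_cast; ring, ih k] at h
            push_cast at h ⊢
            linarith
          have up : ∀ j : ℕ, g (-(m+2:ℕ), (j:ℤ)) = 0 := by
            intro j; induction j with
            | zero => exact_mod_cast gn (-(m+2:ℕ))
            | succ j ih2 =>
              have h := row ((j:ℤ)+1)
              rw [show ((j:ℤ)+1-1) = (j:ℤ) by ring, ih2] at h
              have hne : ((m:ℤ)+2) ≠ 0 := by positivity
              have h2 := (mul_eq_zero.mp h.symm).resolve_left hne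
              push_cast
              exact h2
          have down : ∀ j : ℕ, g (-(m+2:ℕ), -(j:ℤ)) = 0 := by
            intro j; induction j with
            | zero => exact_mod_cast gn (-(m+2:ℕ))
            | succ j ih2 =>
              have h := row (-(j:ℤ))
              rw [ih2] at h
              push_cast at h ⊢
              rw [show (-((j:ℤ)+1)) = -(j:ℤ) - 1 by ring]
              rw [h]; ring
          intro k
          rcases le_or_gt 0 k with h | h
          · rw [show k = (k.toNat : ℤ) by omega]; exact up k.toNat
          · rw [show k = -((-k).toNat : ℤ) by omega]; exact down (-k).toNat
      rw [show n = -((((-n).toNat - 1 : ℕ) : ℤ) + 1) by omega]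
      have := H ((-n).toNat - 1) k
      push_cast at this
      exact this
  funext p
  have h0 := key (fun p => f p - F p)
    (by intro n k; rw [hrec, F_recur]; ring)
    (by intro k; rw [hbk, F_boundary_k]; ring)
    (by intro n; rw [hbn, F_boundary_n]; ring) p
  linarith


open Equiv Equiv.Perm Finset


section CC

variable {α : Type*} [Fintype α] [DecidableEq α]

/-- fixed points as a finset -/
def fixedPts (σ : Perm α) : Finset α := univ.filter fun x => σ x = x

noncomputable def ccount (σ : Perm α) : ℕ :=
  Multiset.card σ.cycleType + Nat.card {x // σ x = x}

lemma ccount_eq (σ : Perm α) :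
    ccount σ = σ.cycleFactorsFinset.card + (fixedPts σ).card := by
  have h1 : Multiset.card σ.cycleType = σ.cycleFactorsFinset.card := by
    rw [cycleType_def, Multiset.card_map]; rfl
  have h2 : Nat.card {x // σ x = x} = (fixedPts σ).card := by
    rw [Nat.card_eq_fintype_card, fixedPts, Fintype.card_subtype]
  rw [ccount, h1, h2]

lemma mem_fixedPts {σ : Perm α} {x : α} : x ∈ fixedPts σ ↔ σ x = x := by
  simp [fixedPts]

theorem ccount_swap_mul' (σ : Perm α) (a p : α) (hp : σ a = p) (hap : a ≠ p) :
    ccount (Equiv.swap a p * σ) = ccount σ + 1 := by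
  have h : σ a ≠ a := by rw [hp]; exact fun he => hap he.symm
  set τ := Equiv.swap a p * σ with hτ
  by_cases hB : σ p = a
  · -- 2-cycle case
    have hf : Equiv.swap a p ∈ σ.cycleFactorsFinset := by
      rw [mem_cycleFactorsFinset_iff]
      refine ⟨isCycle_swap hap, ?_⟩
      intro b hb
      rw [support_swap hap] at hb
      simp only [Finset.mem_insert, Finset.mem_singleton] at hb
      rcases hb with hb | hb
      · subst hb; rw [swap_apply_left, hp]
      · subst hb; rw [swap_apply_right, hB]
    have hcomm : Commute (Equiv.swap a p) σ := self_mem_cycle_factors_commute hf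
    have hρ : τ = σ * (Equiv.swap a p)⁻¹ := by
      rw [hτ, swap_inv]; exact hcomm.eq
    have hcards : τ.cycleFactorsFinset.card = σ.cycleFactorsFinset.card - 1 := by
      rw [hρ, cycleFactorsFinset_mul_inv_mem_eq_sdiff hf,
        Finset.card_sdiff_of_subset (by simpa using hf)]
      simp
    have hpfix : σ p ≠ p := by rw [hB]; exact fun he => hap he
    have hfix : fixedPts τ = insert a (insert p (fixedPts σ)) := by
      ext x
      simp only [mem_fixedPts, Finset.mem_insert]
      constructor
      · intro hx
        by_cases hxa : x = a
        · exact Or.inl hxa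
        by_cases hxp : x = p
        · exact Or.inr (Or.inl hxp)
        · refine Or.inr (Or.inr ?_)
          have h1 : σ x ≠ a := fun he => hxp (σ.injective (by rw [he, hB]))
          have h2 : σ x ≠ p := fun he => hxa (σ.injective (by rw [he, ← hp]))
          rw [hτ] at hx
          simp only [Perm.mul_apply] at hx
          rwa [swap_apply_of_ne_of_ne h1 h2] at hx
      · intro hx
        rcases hx with hxa | hxp | hx
        · subst hxa
          show Equiv.swap x p (σ x) = x
          rw [hp, swap_apply_right]
        · subst hxp
          show Equiv.swap a x (σ x) = x
          rw [hB, swap_apply_left]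
        · show Equiv.swap a p (σ x) = x
          have hxa : x ≠ a := fun he => h (by rw [← he, hx])
          have hxp : x ≠ p := fun he => hpfix (by rw [← he, hx])
          rw [hx, swap_apply_of_ne_of_ne hxa hxp]
    have hanotfix : a ∉ insert p (fixedPts σ) := by
      simp only [Finset.mem_insert, mem_fixedPts]
      push_neg
      exact ⟨hap, h⟩
    have hpnotfix : p ∉ fixedPts σ := fun hc => hpfix (mem_fixedPts.mp hc)
    have hfcard : (fixedPts τ).card = (fixedPts σ).card + 2 := by
      rw [hfix, Finset.card_insert_of_notMem hanotfix,
        Finset.card_insert_of_notMem hpnotfix]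
    have hpos : 1 ≤ σ.cycleFactorsFinset.card :=
      Finset.card_pos.mpr ⟨_, hf⟩
    rw [ccount_eq, ccount_eq, hcards, hfcard]
    omega
  · -- long cycle case
    have hppne : σ p ≠ p := fun he => h (σ.injective (by rw [← hp] at he; rw [he, hp]))
    have hc : σ.cycleOf a ∈ σ.cycleFactorsFinset :=
      cycleOf_mem_cycleFactorsFinset_iff.mpr (mem_support.mpr h)
    set c := σ.cycleOf a with hcdef
    have hca : c a = p := by rw [hcdef, cycleOf_apply_self, hp]
    have hsc : σ.SameCycle a p := ⟨1, by simp [hp]⟩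
    have hcp : c p = σ p := hsc.cycleOf_apply
    set ρ := σ * c⁻¹ with hρdef
    have hdisj : Disjoint ρ c := disjoint_mul_inv_of_mem_cycleFactorsFinset hc
    have hσrc : σ = ρ * c := by rw [hρdef]; group
    have hccyc : IsCycle c := isCycle_cycleOf σ h
    -- c' is a cycle
    have hc'cyc : IsCycle (Equiv.swap a p * c) := by
      have := hccyc.swap_mul (x := a) (by rw [hca]; exact fun he => hap he.symm)
        (by rw [hca, hcp]; exact fun he => hB he)
      rwa [hca] at this
    set c' := Equiv.swap a p * c with hc'def
    -- ρ fixes a and p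
    have hρa : ρ a = a := by
      rcases hdisj a with h1 | h1
      · exact h1
      · rw [hca] at h1; exact absurd h1 (fun he => hap he.symm)
    have hρp : ρ p = p := by
      rcases hdisj p with h1 | h1
      · exact h1
      · rw [hcp] at h1; exact absurd h1 hppne
    -- swap a p commutes with ρ
    have hswρ : Disjoint (Equiv.swap a p) ρ := by
      intro x
      by_cases hxa : x = a
      · subst hxa; exact Or.inr hρa
      by_cases hxp : x = p
      · subst hxp; exact Or.inr hρp
      · exact Or.inl (swap_apply_of_ne_of_ne hxa hxp)
    have hτρc' : τ = ρ * c' := by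
      rw [hτ, hc'def, hσrc, ← mul_assoc, hswρ.commute.eq, mul_assoc]
    have hdisj' : Disjoint ρ c' := by
      intro x
      by_cases hcx : c x = x
      · refine Or.inr ?_
        have hxa : x ≠ a := fun he => (by rw [he, hca] at hcx; exact hap hcx.symm)
        have hxp : x ≠ p := fun he => (by rw [he, hcp] at hcx; exact hppne hcx)
        rw [hc'def]
        show Equiv.swap a p (c x) = x
        rw [hcx, swap_apply_of_ne_of_ne hxa hxp]
      · exact Or.inl ((hdisj x).resolve_right hcx)
    have hfacρ : ρ.cycleFactorsFinset = σ.cycleFactorsFinset \ {c} :=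
      cycleFactorsFinset_mul_inv_mem_eq_sdiff hc
    have hfacτ : τ.cycleFactorsFinset = ρ.cycleFactorsFinset ∪ {c'} := by
      rw [hτρc', hdisj'.cycleFactorsFinset_mul_eq_union,
        hc'cyc.cycleFactorsFinset_eq_singleton]
    have hc'notρ : c' ∉ ρ.cycleFactorsFinset := by
      have := hdisj'.disjoint_cycleFactorsFinset
      rw [hc'cyc.cycleFactorsFinset_eq_singleton, Finset.disjoint_singleton_right] at this
      exact this
    have hcards : τ.cycleFactorsFinset.card = σ.cycleFactorsFinset.card := by
      rw [hfacτ, Finset.union_comm, ← Finset.insert_eq,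
        Finset.card_insert_of_notMem hc'notρ, hfacρ,
        Finset.card_sdiff_of_subset (by simpa using hc)]
      have hpos : 1 ≤ σ.cycleFactorsFinset.card := Finset.card_pos.mpr ⟨_, hc⟩
      simp only [Finset.card_singleton]
      omega
    -- fixed points
    have hfix : fixedPts τ = insert a (fixedPts σ) := by
      ext x
      simp only [mem_fixedPts, Finset.mem_insert]
      constructor
      · intro hx
        by_cases hxa : x = a
        · exact Or.inl hxa
        · refine Or.inr ?_
          have h2 : σ x ≠ p := fun he => hxa (σ.injective (by rw [he, ← hp]))
          have h1 : σ x ≠ a := by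
            intro he
            -- then τ x = p, so x = p and σ p = a, contradiction with hB
            have : Equiv.swap a p (σ x) = x := hx
            rw [he, swap_apply_left] at this
            exact hB (by rw [← this] at he; exact he)
          have : Equiv.swap a p (σ x) = x := hx
          rwa [swap_apply_of_ne_of_ne h1 h2] at this
      · intro hx
        rcases hx with hxa | hx
        · subst hxa
          show Equiv.swap x p (σ x) = x
          rw [hp, swap_apply_right]
        · show Equiv.swap a p (σ x) = x
          have hxa : x ≠ a := fun he => h (by rw [← he, hx])
          have hxp : x ≠ p := fun he => hppne (by rw [← he, hx])
          rw [hx, swap_apply_of_ne_of_ne hxa hxp]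
    have hfcard : (fixedPts τ).card = (fixedPts σ).card + 1 := by
      rw [hfix, Finset.card_insert_of_notMem (fun hc => h (mem_fixedPts.mp hc))]
    rw [ccount_eq, ccount_eq, hcards, hfcard]
    omega

theorem ccount_swap_mul (σ : Perm α) (a : α) (h : σ a ≠ a) :
    ccount (Equiv.swap a (σ a) * σ) = ccount σ + 1 :=
  ccount_swap_mul' σ a (σ a) rfl (fun he => h he.symm)

end CC

section FinSide

open Equiv Equiv.Perm

variable {n : ℕ}

/-- extend a permutation of `Fin n` to `Fin (n+1)` fixing `0`. -/
def pext (e : Perm (Fin n)) : Perm (Fin (n + 1)) := Equiv.Perm.decomposeFin.symm (0, e)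

lemma pext_zero (e : Perm (Fin n)) : pext e 0 = 0 := decomposeFin_symm_apply_zero 0 e

lemma pext_succ (e : Perm (Fin n)) (x : Fin n) : pext e x.succ = (e x).succ := by
  rw [pext, decomposeFin_symm_apply_succ, Equiv.swap_self]
  rfl

lemma decomposeFin_symm_eq (p : Fin (n + 1)) (e : Perm (Fin n)) :
    Equiv.Perm.decomposeFin.symm (p, e) = Equiv.swap 0 p * pext e := by
  refine Equiv.ext fun x => ?_
  refine Fin.cases ?_ (fun i => ?_) x
  · rw [decomposeFin_symm_apply_zero]
    show _ = Equiv.swap 0 p (pext e 0)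
    rw [pext_zero, swap_apply_left]
  · rw [decomposeFin_symm_apply_succ]
    show _ = Equiv.swap 0 p (pext e i.succ)
    rw [pext_succ]

lemma pext_eq_extendDomain (e : Perm (Fin n)) :
    pext e = e.extendDomain (finSuccAboveEquiv (0 : Fin (n + 1))) := by
  refine Equiv.ext fun x => ?_
  refine Fin.cases ?_ (fun i => ?_) x
  · rw [pext_zero, Perm.extendDomain_apply_not_subtype _ _ (by simp)]
  · have hfi : (finSuccAboveEquiv (0 : Fin (n + 1))) i
        = ⟨i.succ, (Fin.succ_ne_zero i)⟩ := by
      rw [finSuccAboveEquiv_apply]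
      congr 1
    have h2 := Perm.extendDomain_apply_image e (finSuccAboveEquiv (0 : Fin (n + 1))) i
    rw [hfi] at h2
    have h3 : ((finSuccAboveEquiv (0 : Fin (n + 1))) (e i) : Fin (n+1)) = (e i).succ := by
      rw [finSuccAboveEquiv_apply]
      show (0 : Fin (n+1)).succAbove (e i) = _
      rw [Fin.succAbove_zero]
    rw [pext_succ]
    show (e i).succ = e.extendDomain (finSuccAboveEquiv (0 : Fin (n + 1))) (⟨i.succ, (Fin.succ_ne_zero i)⟩ : {x : Fin (n+1) // x ≠ 0})
    rw [h2, h3]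

lemma cycleType_pext (e : Perm (Fin n)) : (pext e).cycleType = e.cycleType := by
  rw [pext_eq_extendDomain]
  exact Equiv.Perm.cycleType_extendDomain _

lemma fixedPts_pext (e : Perm (Fin n)) :
    fixedPts (pext e) = insert 0 ((fixedPts e).map ⟨Fin.succ, Fin.succ_injective n⟩) := by
  ext x
  refine Fin.cases ?_ (fun i => ?_) x
  · simp [mem_fixedPts, pext_zero]
  · simp only [mem_fixedPts, Finset.mem_insert, Finset.mem_map,
      Function.Embedding.coeFn_mk]
    rw [pext_succ]
    constructor
    · intro hx
      exact Or.inr ⟨i, Fin.succ_injective n hx, rfl⟩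
    · rintro (hx | ⟨j, hj, hjx⟩)
      · exact absurd hx (Fin.succ_ne_zero i)
      · have hji : j = i := Fin.succ_injective n hjx
        subst hji
        rw [hj]

lemma ccount_pext (e : Perm (Fin n)) : ccount (pext e) = ccount e + 1 := by
  rw [ccount_eq, ccount_eq]
  have h1 : (pext e).cycleFactorsFinset.card = e.cycleFactorsFinset.card := by
    have := cycleType_pext e
    have h2 : Multiset.card (pext e).cycleType = Multiset.card e.cycleType := by rw [this]
    rwa [cycleType_def, cycleType_def, Multiset.card_map, Multiset.card_map] at h2
  have h2 : (fixedPts (pext e)).card = (fixedPts e).card + 1 := by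
    rw [fixedPts_pext, Finset.card_insert_of_notMem, Finset.card_map]
    simp only [Finset.mem_map, Function.Embedding.coeFn_mk]
    rintro ⟨j, -, hj⟩
    exact Fin.succ_ne_zero j hj
  rw [h1, h2]
  omega

lemma ccount_decomposeFin (p : Fin (n + 1)) (e : Perm (Fin n)) :
    ccount (Equiv.Perm.decomposeFin.symm (p, e))
      = ccount e + (if p = 0 then 1 else 0) := by
  by_cases hp : p = 0
  · subst hp
    rw [if_pos rfl]
    exact ccount_pext e
  · rw [if_neg hp]
    set σ := Equiv.Perm.decomposeFin.symm (p, e) with hσ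
    have hσ0 : σ 0 = p := decomposeFin_symm_apply_zero p e
    have key := ccount_swap_mul' σ 0 p hσ0 (fun he => hp he.symm)
    have hsw : Equiv.swap 0 p * σ = pext e := by
      rw [hσ, decomposeFin_symm_eq, ← mul_assoc, swap_mul_self, one_mul]
    rw [hsw, ccount_pext] at key
    omega

/-- counting version of the Stirling cycle number -/
noncomputable def SC (n k : ℕ) : ℕ := Nat.card {σ : Perm (Fin n) // ccount σ = k}

lemma SC_zero (k : ℕ) : SC 0 k = if k = 0 then 1 else 0 := by
  have hall : ∀ σ : Perm (Fin 0), ccount σ = 0 := by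
    intro σ
    have h1 : σ = 1 := Subsingleton.elim _ _
    subst h1
    rw [ccount, Equiv.Perm.cycleType_one]
    simp [Nat.card_of_isEmpty]
  rcases Nat.eq_zero_or_pos k with hk | hk
  · subst hk
    rw [if_pos rfl, SC, Nat.card_congr (Equiv.subtypeUnivEquiv hall),
      Nat.card_eq_fintype_card]
    simp
  · rw [if_neg (by omega), SC]
    have : IsEmpty {σ : Perm (Fin 0) // ccount σ = k} :=
      ⟨fun s => by have := s.2; rw [hall s.1] at this; omega⟩
    exact Nat.card_of_isEmpty

lemma SC_succ (n k : ℕ) :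
    SC (n + 1) k = (if k = 0 then 0 else SC n (k - 1)) + n * SC n k := by
  classical
  have e1 : {σ : Perm (Fin (n+1)) // ccount σ = k}
      ≃ {pe : Fin (n+1) × Perm (Fin n) // ccount pe.2 + (if pe.1 = 0 then 1 else 0) = k} := by
    refine Equiv.Perm.decomposeFin.subtypeEquiv fun σ => ?_
    have := ccount_decomposeFin (Equiv.Perm.decomposeFin σ).1 (Equiv.Perm.decomposeFin σ).2
    rw [show ((Equiv.Perm.decomposeFin σ).1, (Equiv.Perm.decomposeFin σ).2)
        = Equiv.Perm.decomposeFin σ from rfl, Equiv.symm_apply_apply] at this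
    rw [← this]
  have e2 : {pe : Fin (n+1) × Perm (Fin n) // ccount pe.2 + (if pe.1 = 0 then 1 else 0) = k}
      ≃ Σ p : Fin (n+1), {e : Perm (Fin n) // ccount e + (if p = 0 then 1 else 0) = k} :=
    Equiv.subtypeProdEquivSigmaSubtype (fun (p : Fin (n+1)) (e : Perm (Fin n)) => ccount e + (if p = 0 then 1 else 0) = k)
  rw [SC, Nat.card_congr (e1.trans e2), Nat.card_eq_fintype_card, Fintype.card_sigma]
  set g : Fin (n+1) → ℕ :=
    fun p => Fintype.card {e : Perm (Fin n) // ccount e + (if p = 0 then 1 else 0) = k} with hg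
  have hsplit : ∑ p : Fin (n+1), g p = g 0 + ∑ p ∈ Finset.univ.erase 0, g p :=
    (Finset.add_sum_erase _ g (Finset.mem_univ 0)).symm
  have hg0 : g 0 = (if k = 0 then 0 else SC n (k - 1)) := by
    rcases Nat.eq_zero_or_pos k with hk | hk
    · subst hk
      rw [if_pos rfl, hg]
      have : IsEmpty {e : Perm (Fin n) // ccount e + (if (0 : Fin (n+1)) = 0 then 1 else 0) = 0} :=
        ⟨fun s => by have h2 := s.2; simp at h2⟩
      exact Fintype.card_eq_zero
    · rw [if_neg (by omega), hg, SC, Nat.card_eq_fintype_card]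
      apply Fintype.card_congr
      refine Equiv.subtypeEquivRight fun e => ?_
      simp only [eq_self_iff_true, if_true]
      omega
  have hgp : ∀ p ∈ Finset.univ.erase (0 : Fin (n+1)), g p = SC n k := by
    intro p hp
    have hp0 : p ≠ 0 := (Finset.mem_erase.mp hp).1
    rw [hg, SC, Nat.card_eq_fintype_card]
    apply Fintype.card_congr
    refine Equiv.subtypeEquivRight fun e => ?_
    simp [hp0]
  rw [hsplit, hg0, Finset.sum_congr rfl hgp, Finset.sum_const, smul_eq_mul]
  congr 2
  rw [Finset.card_erase_of_mem (Finset.mem_univ 0)]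
  simp

lemma cyc_eq_SC : ∀ n k, cyc n k = SC n k := by
  intro n
  induction n with
  | zero =>
    intro k
    rw [SC_zero]
    cases k with
    | zero => rfl
    | succ k => rw [if_neg (by omega)]; rfl
  | succ n ih =>
    intro k
    rw [SC_succ]
    cases k with
    | zero =>
      rw [if_pos rfl]
      show n * cyc n 0 = 0 + n * SC n 0
      rw [ih 0]; omega
    | succ k =>
      rw [if_neg (by omega)]
      show n * cyc n (k+1) + cyc n k = _
      rw [ih (k+1), ih k]
      simp only [Nat.add_sub_cancel]
      omega

end FinSide


namespace PartCount

open Finset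


variable {n : ℕ}

def upE : Fin n ↪ Fin (n + 1) := ⟨Fin.castSucc, Fin.castSucc_injective n⟩

def up (s : Finset (Fin n)) : Finset (Fin (n + 1)) := s.map upE

def dn (s : Finset (Fin (n + 1))) : Finset (Fin n) :=
  Finset.univ.filter (fun i => i.castSucc ∈ s)

lemma mem_dn {s : Finset (Fin (n+1))} {i : Fin n} : i ∈ dn s ↔ i.castSucc ∈ s := by
  simp [dn]

lemma mem_up {s : Finset (Fin n)} {x : Fin (n+1)} :
    x ∈ up s ↔ ∃ i ∈ s, i.castSucc = x := by
  simp [up, upE]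

lemma castSucc_mem_up {s : Finset (Fin n)} {i : Fin n} :
    i.castSucc ∈ up s ↔ i ∈ s := by
  rw [mem_up]
  constructor
  · rintro ⟨j, hj, hji⟩
    rwa [← Fin.castSucc_injective n hji]
  · exact fun h => ⟨i, h, rfl⟩

lemma last_not_mem_up {s : Finset (Fin n)} : Fin.last n ∉ up s := by
  rw [mem_up]
  rintro ⟨i, -, hi⟩
  exact absurd hi (Fin.castSucc_lt_last i).ne

lemma mem_up_ne_last {s : Finset (Fin n)} {x : Fin (n+1)} (h : x ∈ up s) :
    x ≠ Fin.last n := fun he => last_not_mem_up (he ▸ h)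

lemma dn_up (s : Finset (Fin n)) : dn (up s) = s := by
  ext i; rw [mem_dn, castSucc_mem_up]

lemma up_dn {s : Finset (Fin (n+1))} (h : Fin.last n ∉ s) : up (dn s) = s := by
  ext x
  rw [mem_up]
  constructor
  · rintro ⟨i, hi, rfl⟩
    exact mem_dn.mp hi
  · intro hx
    have hxl : x ≠ Fin.last n := fun he => h (he ▸ hx)
    exact ⟨x.castPred hxl, mem_dn.mpr (by rwa [Fin.castSucc_castPred]), Fin.castSucc_castPred x hxl⟩

lemma up_injective : Function.Injective (up (n := n)) := fun s t h => by
  rw [← dn_up s, ← dn_up t, h]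

lemma dn_insert_last (s : Finset (Fin (n+1))) : dn (insert (Fin.last n) s) = dn s := by
  ext i
  rw [mem_dn, mem_dn, Finset.mem_insert]
  have : i.castSucc ≠ Fin.last n := (Fin.castSucc_lt_last i).ne
  tauto

lemma up_nonempty {s : Finset (Fin n)} (h : s.Nonempty) : (up s).Nonempty :=
  Finset.map_nonempty.mpr h

lemma exists_ne_last {s : Finset (Fin (n+1))} (hs : s.Nonempty) (h : s ≠ {Fin.last n}) :
    ∃ y ∈ s, y ≠ Fin.last n := by
  by_contra hc
  push_neg at hc
  apply h
  apply Finset.Subset.antisymm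
  · intro y hy; rw [Finset.mem_singleton]; exact hc y hy
  · intro y hy
    rw [Finset.mem_singleton] at hy
    obtain ⟨z, hz⟩ := hs
    rwa [hy, ← hc z hz]

lemma dn_nonempty {s : Finset (Fin (n+1))} (hs : s.Nonempty) (h : s ≠ {Fin.last n}) :
    (dn s).Nonempty := by
  obtain ⟨y, hy, hyl⟩ := exists_ne_last hs h
  exact ⟨y.castPred hyl, mem_dn.mpr (by rwa [Fin.castSucc_castPred])⟩

/-- the partition predicate -/
def IsPart {β : Type*} (P : Finset (Finset β)) (k : ℕ) : Prop :=
  P.card = k ∧ (∀ s ∈ P, s.Nonempty) ∧ ∀ x : β, ∃! s, s ∈ P ∧ x ∈ s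

lemma IsPart.block_eq {β : Type*} {P : Finset (Finset β)} {k : ℕ} (hP : IsPart P k)
    {s t : Finset β} {x : β} (hs : s ∈ P) (ht : t ∈ P) (hxs : x ∈ s) (hxt : x ∈ t) :
    s = t := by
  obtain ⟨u, -, huniq⟩ := hP.2.2 x
  rw [huniq s ⟨hs, hxs⟩, huniq t ⟨ht, hxt⟩]


variable {k : ℕ}

lemma block_not_last {P : Finset (Finset (Fin (n+1)))} (hP : IsPart P (k+1))
    (h : {Fin.last n} ∈ P) {b : Finset (Fin (n+1))} (hb : b ∈ P.erase {Fin.last n}) :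
    Fin.last n ∉ b := by
  intro hlb
  obtain ⟨hbne, hbP⟩ := Finset.mem_erase.mp hb
  exact hbne (hP.block_eq hbP h hlb (Finset.mem_singleton_self _))

lemma part_down_erase {P : Finset (Finset (Fin (n+1)))} (hP : IsPart P (k+1))
    (h : {Fin.last n} ∈ P) :
    IsPart ((P.erase {Fin.last n}).image dn) k := by
  have hinj : Set.InjOn (dn (n := n)) ↑(P.erase {Fin.last n}) := by
    intro b hb b' hb' hdd
    rw [← up_dn (block_not_last hP h (Finset.mem_coe.mp hb)),
      ← up_dn (block_not_last hP h (Finset.mem_coe.mp hb')), hdd]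
  refine ⟨?_, ?_, ?_⟩
  · rw [Finset.card_image_of_injOn hinj, Finset.card_erase_of_mem h, hP.1]
    omega
  · intro s hs
    obtain ⟨b, hb, rfl⟩ := Finset.mem_image.mp hs
    exact dn_nonempty (hP.2.1 b (Finset.mem_of_mem_erase hb)) (Finset.mem_erase.mp hb).1
  · intro x
    obtain ⟨s, ⟨hsP, hxs⟩, huniq⟩ := hP.2.2 x.castSucc
    have hsne : s ≠ {Fin.last n} := by
      rintro rfl
      rw [Finset.mem_singleton] at hxs
      exact (Fin.castSucc_lt_last x).ne hxs
    refine ⟨dn s, ⟨Finset.mem_image_of_mem dn (Finset.mem_erase.mpr ⟨hsne, hsP⟩),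
      mem_dn.mpr hxs⟩, ?_⟩
    rintro t ⟨htmem, hxt⟩
    obtain ⟨b, hb, rfl⟩ := Finset.mem_image.mp htmem
    rw [huniq b ⟨Finset.mem_of_mem_erase hb, mem_dn.mp hxt⟩]

lemma dn_injOn_blocks {P : Finset (Finset (Fin (n+1)))} (hP : IsPart P (k+1))
    (h : {Fin.last n} ∉ P) : Set.InjOn (dn (n := n)) ↑P := by
  -- first: a block either contains last together with another element, or misses last
  intro b hb b' hb' hdd
  have hbP : b ∈ P := Finset.mem_coe.mp hb
  have hb'P : b' ∈ P := Finset.mem_coe.mp hb'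
  by_cases hl : Fin.last n ∈ b <;> by_cases hl' : Fin.last n ∈ b'
  · -- both contain last: equal by uniqueness
    exact hP.block_eq hbP hb'P hl hl'
  · -- b contains last, b' not: b has another element y ≠ last; y ∈ b' too, contra disjointness
    exfalso
    have hbne : b ≠ {Fin.last n} := fun he => h (he ▸ hbP)
    obtain ⟨y, hy, hyl⟩ := exists_ne_last (hP.2.1 b hbP) hbne
    have : y.castPred hyl ∈ dn b := mem_dn.mpr (by rwa [Fin.castSucc_castPred])
    rw [hdd] at this
    have hyb' : y ∈ b' := by
      have := mem_dn.mp this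
      rwa [Fin.castSucc_castPred] at this
    exact hl' ((hP.block_eq hb'P hbP hyb' hy) ▸ hl)
  · exfalso
    have hbne : b' ≠ {Fin.last n} := fun he => h (he ▸ hb'P)
    obtain ⟨y, hy, hyl⟩ := exists_ne_last (hP.2.1 b' hb'P) hbne
    have : y.castPred hyl ∈ dn b' := mem_dn.mpr (by rwa [Fin.castSucc_castPred])
    rw [← hdd] at this
    have hyb : y ∈ b := by
      have := mem_dn.mp this
      rwa [Fin.castSucc_castPred] at this
    exact hl ((hP.block_eq hbP hb'P hyb hy) ▸ hl')
  · rw [← up_dn hl, ← up_dn hl', hdd]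

lemma part_down_image {P : Finset (Finset (Fin (n+1)))} (hP : IsPart P (k+1))
    (h : {Fin.last n} ∉ P) : IsPart (P.image dn) (k+1) := by
  refine ⟨?_, ?_, ?_⟩
  · rw [Finset.card_image_of_injOn (dn_injOn_blocks hP h), hP.1]
  · intro s hs
    obtain ⟨b, hb, rfl⟩ := Finset.mem_image.mp hs
    exact dn_nonempty (hP.2.1 b hb) (fun he => h (he ▸ hb))
  · intro x
    obtain ⟨s, ⟨hsP, hxs⟩, huniq⟩ := hP.2.2 x.castSucc
    refine ⟨dn s, ⟨Finset.mem_image_of_mem dn hsP, mem_dn.mpr hxs⟩, ?_⟩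
    rintro t ⟨htmem, hxt⟩
    obtain ⟨b, hb, rfl⟩ := Finset.mem_image.mp htmem
    rw [huniq b ⟨hb, mem_dn.mp hxt⟩]

lemma part_up_single {Q : Finset (Finset (Fin n))} (hQ : IsPart Q k) :
    IsPart (insert {Fin.last n} (Q.image up)) (k+1) := by
  have hnotmem : ({Fin.last n} : Finset (Fin (n+1))) ∉ Q.image up := by
    intro hmem
    obtain ⟨b, hb, hbe⟩ := Finset.mem_image.mp hmem
    have : Fin.last n ∈ up b := hbe ▸ Finset.mem_singleton_self _
    exact last_not_mem_up this
  refine ⟨?_, ?_, ?_⟩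
  · rw [Finset.card_insert_of_notMem hnotmem,
      Finset.card_image_of_injective _ up_injective, hQ.1]
  · intro s hs
    rcases Finset.mem_insert.mp hs with rfl | hs
    · exact ⟨_, Finset.mem_singleton_self _⟩
    · obtain ⟨b, hb, rfl⟩ := Finset.mem_image.mp hs
      exact up_nonempty (hQ.2.1 b hb)
  · intro x
    by_cases hxl : x = Fin.last n
    · subst hxl
      refine ⟨{Fin.last n}, ⟨Finset.mem_insert_self _ _, Finset.mem_singleton_self _⟩, ?_⟩
      rintro t ⟨htmem, hxt⟩
      rcases Finset.mem_insert.mp htmem with rfl | htmem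
      · rfl
      · obtain ⟨b, hb, rfl⟩ := Finset.mem_image.mp htmem
        exact absurd hxt last_not_mem_up
    · obtain ⟨s, ⟨hsQ, hxs⟩, huniq⟩ := hQ.2.2 (x.castPred hxl)
      refine ⟨up s, ⟨Finset.mem_insert_of_mem (Finset.mem_image_of_mem up hsQ), ?_⟩, ?_⟩
      · rw [mem_up]
        exact ⟨x.castPred hxl, hxs, Fin.castSucc_castPred x hxl⟩
      · rintro t ⟨htmem, hxt⟩
        rcases Finset.mem_insert.mp htmem with rfl | htmem
        · rw [Finset.mem_singleton] at hxt; exact absurd hxt hxl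
        · obtain ⟨b, hb, rfl⟩ := Finset.mem_image.mp htmem
          congr 1
          refine huniq b ⟨hb, ?_⟩
          obtain ⟨i, hi, hix⟩ := mem_up.mp hxt
          have : i = x.castPred hxl := by
            apply Fin.castSucc_injective
            rw [hix, Fin.castSucc_castPred]
          rwa [← this]

lemma part_up_block {Q : Finset (Finset (Fin n))} (hQ : IsPart Q (k+1))
    {s : Finset (Fin n)} (hs : s ∈ Q) :
    IsPart (insert (insert (Fin.last n) (up s)) ((Q.erase s).image up)) (k+1) := by
  have hnotmem : insert (Fin.last n) (up s) ∉ (Q.erase s).image up := by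
    intro hmem
    obtain ⟨b, hb, hbe⟩ := Finset.mem_image.mp hmem
    have : Fin.last n ∈ up b := hbe ▸ Finset.mem_insert_self _ _
    exact last_not_mem_up this
  refine ⟨?_, ?_, ?_⟩
  · rw [Finset.card_insert_of_notMem hnotmem,
      Finset.card_image_of_injective _ up_injective, Finset.card_erase_of_mem hs, hQ.1]
    omega
  · intro t ht
    rcases Finset.mem_insert.mp ht with rfl | ht
    · exact ⟨_, Finset.mem_insert_self _ _⟩
    · obtain ⟨b, hb, rfl⟩ := Finset.mem_image.mp ht
      exact up_nonempty (hQ.2.1 b (Finset.mem_of_mem_erase hb))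
  · intro x
    by_cases hxl : x = Fin.last n
    · subst hxl
      refine ⟨insert (Fin.last n) (up s),
        ⟨Finset.mem_insert_self _ _, Finset.mem_insert_self _ _⟩, ?_⟩
      rintro t ⟨htmem, hxt⟩
      rcases Finset.mem_insert.mp htmem with rfl | htmem
      · rfl
      · obtain ⟨b, hb, rfl⟩ := Finset.mem_image.mp htmem
        exact absurd hxt last_not_mem_up
    · obtain ⟨b₀, ⟨hb₀Q, hxb₀⟩, huniq⟩ := hQ.2.2 (x.castPred hxl)
      by_cases hbs : b₀ = s
      · subst hbs
        refine ⟨insert (Fin.last n) (up b₀), ⟨Finset.mem_insert_self _ _,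
          Finset.mem_insert_of_mem (by
            rw [mem_up]; exact ⟨x.castPred hxl, hxb₀, Fin.castSucc_castPred x hxl⟩)⟩, ?_⟩
        rintro t ⟨htmem, hxt⟩
        rcases Finset.mem_insert.mp htmem with rfl | htmem
        · rfl
        · exfalso
          obtain ⟨b, hb, rfl⟩ := Finset.mem_image.mp htmem
          obtain ⟨i, hi, hix⟩ := mem_up.mp hxt
          have hieq : i = x.castPred hxl := by
            apply Fin.castSucc_injective
            rw [hix, Fin.castSucc_castPred]
          subst hieq
          exact (Finset.mem_erase.mp hb).1 (huniq b ⟨Finset.mem_of_mem_erase hb, hi⟩)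
      · refine ⟨up b₀, ⟨Finset.mem_insert_of_mem
          (Finset.mem_image_of_mem up (Finset.mem_erase.mpr ⟨hbs, hb₀Q⟩)), by
            rw [mem_up]; exact ⟨x.castPred hxl, hxb₀, Fin.castSucc_castPred x hxl⟩⟩, ?_⟩
        rintro t ⟨htmem, hxt⟩
        rcases Finset.mem_insert.mp htmem with rfl | htmem
        · exfalso
          rcases Finset.mem_insert.mp hxt with he | hxt
          · exact hxl he
          · obtain ⟨i, hi, hix⟩ := mem_up.mp hxt
            have hieq : i = x.castPred hxl := by
              apply Fin.castSucc_injective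
              rw [hix, Fin.castSucc_castPred]
            subst hieq
            exact hbs ((huniq s ⟨hs, hi⟩).symm ▸ rfl)
        · obtain ⟨b, hb, rfl⟩ := Finset.mem_image.mp htmem
          congr 1
          obtain ⟨i, hi, hix⟩ := mem_up.mp hxt
          have hieq : i = x.castPred hxl := by
            apply Fin.castSucc_injective
            rw [hix, Fin.castSucc_castPred]
          subst hieq
          exact huniq b ⟨Finset.mem_of_mem_erase hb, hi⟩


abbrev PartT (m k : ℕ) := {P : Finset (Finset (Fin m)) // IsPart P k}

lemma single_not_mem_up_image {Q : Finset (Finset (Fin n))} :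
    ({Fin.last n} : Finset (Fin (n+1))) ∉ Q.image up := by
  intro hmem
  obtain ⟨b, hb, hbe⟩ := Finset.mem_image.mp hmem
  exact last_not_mem_up (hbe ▸ Finset.mem_singleton_self _)

lemma dn_image_up (Q : Finset (Finset (Fin n))) : (Q.image up).image dn = Q := by
  rw [Finset.image_image]
  have h : (dn ∘ up : Finset (Fin n) → Finset (Fin n)) = id := funext dn_up
  rw [h, Finset.image_id]

lemma dn_erase_last (t : Finset (Fin (n+1))) : dn (t.erase (Fin.last n)) = dn t := by
  ext i
  rw [mem_dn, mem_dn, Finset.mem_erase]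
  have : i.castSucc ≠ Fin.last n := (Fin.castSucc_lt_last i).ne
  tauto

/-- forward map -/
def fwd (P : PartT (n+1) (k+1)) :
    (Σ Q : PartT n (k+1), {s // s ∈ Q.val}) ⊕ PartT n k :=
  if h : ({Fin.last n} : Finset (Fin (n+1))) ∈ P.val then
    Sum.inr ⟨(P.val.erase {Fin.last n}).image dn, part_down_erase P.2 h⟩
  else
    Sum.inl ⟨⟨P.val.image dn, part_down_image P.2 h⟩,
      ⟨dn (P.val.choose (fun s => Fin.last n ∈ s) (P.2.2.2 (Fin.last n))),
        Finset.mem_image_of_mem dn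
          (Finset.choose_mem (fun s => Fin.last n ∈ s) P.val (P.2.2.2 (Fin.last n)))⟩⟩

/-- backward map -/
def bwd (z : (Σ Q : PartT n (k+1), {s // s ∈ Q.val}) ⊕ PartT n k) :
    PartT (n+1) (k+1) :=
  match z with
  | Sum.inl ⟨Q, s, hs⟩ =>
      ⟨insert (insert (Fin.last n) (up s)) ((Q.val.erase s).image up), part_up_block Q.2 hs⟩
  | Sum.inr Q => ⟨insert {Fin.last n} (Q.val.image up), part_up_single Q.2⟩

lemma image_fixes {β : Type*} [DecidableEq β] {f : β → β} {X : Finset β}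
    (h : ∀ b ∈ X, f b = b) : X.image f = X := by
  ext b
  simp only [Finset.mem_image]
  constructor
  · rintro ⟨c, hc, rfl⟩
    rw [h c hc]
    exact hc
  · intro hb
    exact ⟨b, hb, h b hb⟩

lemma sigma_eq {a b : Σ Q : PartT n k, {s // s ∈ Q.val}}
    (h1 : a.1.val = b.1.val) (h2 : a.2.val = b.2.val) : a = b := by
  obtain ⟨⟨P1, hP1⟩, s1, hs1⟩ := a
  obtain ⟨⟨P2, hP2⟩, s2, hs2⟩ := b
  simp only at h1 h2
  subst h1
  subst h2
  rfl

lemma bwd_fwd (P : PartT (n+1) (k+1)) : bwd (fwd P) = P := by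
  by_cases h : ({Fin.last n} : Finset (Fin (n+1))) ∈ P.val
  · rw [fwd, dif_pos h]
    apply Subtype.ext
    show insert {Fin.last n} (((P.val.erase {Fin.last n}).image dn).image up) = P.val
    rw [Finset.image_image]
    have himg : (P.val.erase {Fin.last n}).image (up ∘ dn) = P.val.erase {Fin.last n} :=
      image_fixes (fun b hb => up_dn (block_not_last P.2 h hb))
    rw [himg, Finset.insert_erase h]
  · rw [fwd, dif_neg h]
    set t := P.val.choose (fun s => Fin.last n ∈ s) (P.2.2.2 (Fin.last n)) with htdef
    have htP : t ∈ P.val := Finset.choose_mem _ _ _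
    have hlt : Fin.last n ∈ t := Finset.choose_property (fun s => Fin.last n ∈ s) P.val _
    apply Subtype.ext
    show insert (insert (Fin.last n) (up (dn t)))
      (((P.val.image dn).erase (dn t)).image up) = P.val
    -- first component
    have h1 : insert (Fin.last n) (up (dn t)) = t := by
      rw [← dn_erase_last, up_dn (Finset.notMem_erase _ _), Finset.insert_erase hlt]
    -- second: (P.image dn).erase (dn t) = (P.erase t).image dn
    have h2 : (P.val.image dn).erase (dn t) = (P.val.erase t).image dn := by
      ext x
      rw [Finset.mem_erase, Finset.mem_image]
      constructor
      · rintro ⟨hne, b, hb, rfl⟩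
        exact Finset.mem_image.mpr ⟨b, Finset.mem_erase.mpr ⟨fun he => hne (he ▸ rfl), hb⟩, rfl⟩
      · intro hx
        obtain ⟨b, hb, rfl⟩ := Finset.mem_image.mp hx
        obtain ⟨hbne, hbP⟩ := Finset.mem_erase.mp hb
        refine ⟨fun he => hbne (dn_injOn_blocks P.2 h hbP htP he), b, hbP, rfl⟩
    have h3 : ((P.val.erase t).image dn).image up = P.val.erase t := by
      rw [Finset.image_image]
      refine image_fixes (fun b hb => up_dn ?_)
      intro hlast
      obtain ⟨hbne, hbP⟩ := Finset.mem_erase.mp hb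
      exact hbne (P.2.block_eq hbP htP hlast hlt)
    rw [h1, h2, h3, Finset.insert_erase htP]

lemma fwd_bwd (z : (Σ Q : PartT n (k+1), {s // s ∈ Q.val}) ⊕ PartT n k) :
    fwd (bwd z) = z := by
  match z with
  | Sum.inr Q =>
    have hmem : ({Fin.last n} : Finset (Fin (n+1)))
        ∈ insert {Fin.last n} (Q.val.image up) := Finset.mem_insert_self _ _
    rw [bwd]
    show fwd ⟨insert {Fin.last n} (Q.val.image up), _⟩ = _
    rw [fwd, dif_pos hmem]
    congr 1
    apply Subtype.ext
    show ((insert {Fin.last n} (Q.val.image up)).erase {Fin.last n}).image dn = Q.val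
    rw [Finset.erase_insert single_not_mem_up_image, dn_image_up]
  | Sum.inl ⟨Q, s, hs⟩ =>
    rw [bwd]
    have hQs : s.Nonempty := Q.2.2.1 s hs
    set Pv := insert (insert (Fin.last n) (up s)) ((Q.val.erase s).image up) with hPv
    have hnot : ({Fin.last n} : Finset (Fin (n+1))) ∉ Pv := by
      rw [hPv, Finset.mem_insert]
      rintro (he | hmem)
      · obtain ⟨i, hi⟩ := hQs
        have : i.castSucc ∈ insert (Fin.last n) (up s) :=
          Finset.mem_insert_of_mem (castSucc_mem_up.mpr hi)
        rw [← he, Finset.mem_singleton] at this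
        exact (Fin.castSucc_lt_last i).ne this
      · obtain ⟨b, hb, hbe⟩ := Finset.mem_image.mp hmem
        exact last_not_mem_up (hbe ▸ Finset.mem_singleton_self _)
    show fwd ⟨Pv, _⟩ = _
    rw [fwd, dif_neg hnot]
    have hPart : IsPart Pv (k+1) := part_up_block Q.2 hs
    set t := Pv.choose (fun s => Fin.last n ∈ s) (hPart.2.2 (Fin.last n)) with htdef
    have htP : t ∈ Pv := Finset.choose_mem _ _ _
    have hlt : Fin.last n ∈ t := Finset.choose_property (fun s => Fin.last n ∈ s) Pv _
    have ht : t = insert (Fin.last n) (up s) := by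
      obtain ⟨u, hu, huniq⟩ := hPart.2.2 (Fin.last n)
      rw [huniq t ⟨htP, hlt⟩,
        huniq (insert (Fin.last n) (up s)) ⟨Finset.mem_insert_self _ _, Finset.mem_insert_self _ _⟩]
    congr 1
    refine sigma_eq ?_ ?_
    · show Pv.image dn = Q.val
      rw [hPv, Finset.image_insert, dn_insert_last, dn_up, Finset.image_image]
      have h3 : (Q.val.erase s).image (dn ∘ up) = Q.val.erase s :=
        image_fixes (fun b _ => dn_up b)
      rw [h3, Finset.insert_erase hs]
    · show dn t = s
      rw [ht, dn_insert_last, dn_up]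

/-- the key equivalence -/
def partEquiv (n k : ℕ) :
    PartT (n+1) (k+1) ≃ (Σ Q : PartT n (k+1), {s // s ∈ Q.val}) ⊕ PartT n k where
  toFun := fwd
  invFun := bwd
  left_inv := bwd_fwd
  right_inv := fwd_bwd


noncomputable def SS (m k : ℕ) : ℕ := Nat.card {P : Finset (Finset (Fin m)) // IsPart P k}

lemma SS_zero (k : ℕ) : SS 0 k = if k = 0 then 1 else 0 := by
  have hblocks : ∀ P : Finset (Finset (Fin 0)), (∀ s ∈ P, Finset.Nonempty s) → P = ∅ := by
    intro P hP
    rcases Finset.eq_empty_or_nonempty P with h | ⟨s, hs⟩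
    · exact h
    · obtain ⟨x, -⟩ := hP s hs
      exact absurd x.2 (by omega)
  rcases Nat.eq_zero_or_pos k with hk | hk
  · subst hk
    rw [if_pos rfl, SS]
    haveI : Unique {P : Finset (Finset (Fin 0)) // IsPart P 0} := by
      refine ⟨⟨⟨∅, rfl, ?_, ?_⟩⟩, ?_⟩
      · intro s hs; exact absurd hs (Finset.notMem_empty s)
      · intro x; exact absurd x.2 (by omega)
      · intro P
        apply Subtype.ext
        show P.val = ∅
        exact hblocks P.val P.2.2.1
    exact Nat.card_unique
  · rw [if_neg (by omega), SS]
    haveI : IsEmpty {P : Finset (Finset (Fin 0)) // IsPart P k} := by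
      refine ⟨fun P => ?_⟩
      have h1 : P.val = ∅ := hblocks P.val P.2.2.1
      have h2 := P.2.1
      rw [h1] at h2
      simp at h2
      omega
    exact Nat.card_of_isEmpty

lemma SS_succ_zero (n : ℕ) : SS (n+1) 0 = 0 := by
  rw [SS]
  haveI : IsEmpty {P : Finset (Finset (Fin (n+1))) // IsPart P 0} := by
    refine ⟨fun P => ?_⟩
    have h1 : P.val = ∅ := Finset.card_eq_zero.mp P.2.1
    obtain ⟨s, ⟨hs, -⟩, -⟩ := P.2.2.2 (Fin.last n)
    rw [h1] at hs
    exact Finset.notMem_empty s hs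
  exact Nat.card_of_isEmpty

lemma SS_succ (n k : ℕ) : SS (n+1) (k+1) = (k+1) * SS n (k+1) + SS n k := by
  classical
  have h0 : SS (n+1) (k+1)
      = Nat.card ((Σ Q : PartT n (k+1), {s // s ∈ Q.val}) ⊕ PartT n k) :=
    Nat.card_congr (partEquiv n k)
  rw [h0, Nat.card_sum]
  have h1 : Nat.card (Σ Q : PartT n (k+1), {s // s ∈ Q.val}) = (k+1) * SS n (k+1) := by
    rw [Nat.card_eq_fintype_card, Fintype.card_sigma]
    have hterm : ∀ Q : PartT n (k+1), Fintype.card {s // s ∈ Q.val} = k + 1 := by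
      intro Q
      have h2 : Fintype.card {s // s ∈ Q.val} = Q.val.card := Fintype.card_coe Q.val
      rw [h2, Q.2.1]
    rw [Finset.sum_congr rfl (fun Q _ => hterm Q), Finset.sum_const, smul_eq_mul]
    rw [SS, Nat.card_eq_fintype_card, Finset.card_univ]
    exact Nat.mul_comm _ _
  rw [h1]
  rfl

lemma subs_eq_SS : ∀ m k, subs m k = SS m k := by
  intro m
  induction m with
  | zero =>
    intro k
    rw [SS_zero]
    cases k with
    | zero => rfl
    | succ k => rw [if_neg (by omega)]; rfl
  | succ m ih =>
    intro k
    cases k with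
    | zero => rw [SS_succ_zero]; rfl
    | succ k =>
      rw [SS_succ]
      show (k+1) * subs m (k+1) + subs m k = _
      rw [ih (k+1), ih k]

end PartCount

/-- There is exactly one doubly infinite array `f : ℤ × ℤ → ℤ` satisfying the
Stirling cycle recurrence together with the boundary conditions
`f(0,k) = [k = 0]` and `f(n,0) = [n = 0]`; it contains the Stirling cycle
numbers in its positive part, and (duality law) the Stirling subset numbers,
reflected, in its negative part. -/
theorem stmt_12 :
    (∃! f : ℤ × ℤ → ℤ,
      (∀ n k : ℤ, f (n + 1, k) = n * f (n, k) + f (n, k - 1)) ∧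
      (∀ k : ℤ, f (0, k) = if k = 0 then 1 else 0) ∧
      (∀ n : ℤ, f (n, 0) = if n = 0 then 1 else 0)) ∧
    (∀ f : ℤ × ℤ → ℤ,
      ((∀ n k : ℤ, f (n + 1, k) = n * f (n, k) + f (n, k - 1)) ∧
       (∀ k : ℤ, f (0, k) = if k = 0 then 1 else 0) ∧
       (∀ n : ℤ, f (n, 0) = if n = 0 then 1 else 0)) →
      ∀ n k : ℕ, f ((n : ℤ), (k : ℤ)) = stirlingCycle n k ∧
        f (-(k : ℤ), -(n : ℤ)) = stirlingSubset n k) := by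
  have hC : ∀ n k : ℕ, stirlingCycle n k = cyc n k := fun n k => ((cyc_eq_SC n k).trans rfl).symm
  have hS : ∀ n k : ℕ, stirlingSubset n k = subs n k :=
    fun n k => ((PartCount.subs_eq_SS n k).trans rfl).symm
  constructor
  · exact ⟨F, ⟨F_recur, F_boundary_k, F_boundary_n⟩,
      fun g hg => F_unique g hg.1 hg.2.1 hg.2.2⟩
  · rintro f ⟨h1, h2, h3⟩ n k
    have hf : f = F := F_unique f h1 h2 h3
    subst hf
    constructor
    · rw [F_pos (Int.natCast_nonneg n) (Int.natCast_nonneg k), hC]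
      simp
    · rcases Nat.eq_zero_or_pos k with hk | hk
      · subst hk
        simp only [Nat.cast_zero, neg_zero]
        rw [F_boundary_k, hS]
        rw [subs_zero_right]
        rcases Nat.eq_zero_or_pos n with hn | hn
        · subst hn; norm_num
        · rw [if_neg (by omega), if_neg (by omega)]
          norm_num
      · rw [F_neg (by omega : -(k:ℤ) < 0) (by omega : -(n:ℤ) ≤ 0), hS]
        norm_num
end

section
/- Let z be a complex number that is not a negative integer. The infinite series ∑_{k=1}^{∞} (k−1)!/((z+1)(z+2)⋯(z+k)) converges if and only if Re(z) > 0, and when Re(z) > 0 its sum equals 1/z. -/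
/-!
Telescoping gives `∑_{j<N} j!/((z+1)⋯(z+j+1)) = 1/z - N!/(z(z+1)⋯(z+N))`, and the last fraction is
`Γ_N(z) N^{-z}` for Gauss's approximants `Γ_N(z) → Γ(z) ≠ 0`. Hence the partial sums converge exactly
when `N^{-z}` does, i.e. when `z = 0` or `Re z > 0`, and then `N^{-z} → 0`; at `z = 0` the series is
the harmonic series. For `Re w = 0 ≠ w`, `N^w` has no limit: a limit `c` would have `|c| = 1` and force
`a^w = 1` for every `a > 0`, whereas `exp (π / Im w) ^ w = -1`.
-/

open Filter Finset Topology Nat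

section LimitOfProduct

variable {α 𝕜 : Type*} [GroupWithZero 𝕜] [TopologicalSpace 𝕜] [T1Space 𝕜] [ContinuousMul 𝕜]
  [ContinuousInv₀ 𝕜] {l : Filter α} {f g : α → 𝕜} {a : 𝕜}

theorem exists_tendsto_mul_iff_of_tendsto (hf : Tendsto f l (𝓝 a)) (ha : a ≠ 0) :
    (∃ L, Tendsto (fun x => f x * g x) l (𝓝 L)) ↔ ∃ L, Tendsto g l (𝓝 L) := by
  refine ⟨fun ⟨L, hL⟩ => ⟨a⁻¹ * L, ((hf.inv₀ ha).mul hL).congr' ?_⟩, fun ⟨L, hL⟩ => ⟨a * L, hf.mul hL⟩⟩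
  filter_upwards [hf.eventually_ne ha] with x hx
  rw [inv_mul_cancel_left₀ hx]

end LimitOfProduct

theorem exists_tendsto_const_sub_iff {α G : Type*} [AddCommGroup G] [TopologicalSpace G]
    [IsTopologicalAddGroup G] {l : Filter α} {f : α → G} (a : G) :
    (∃ L, Tendsto (fun x => a - f x) l (𝓝 L)) ↔ ∃ L, Tendsto f l (𝓝 L) :=
  ⟨fun ⟨L, hL⟩ => ⟨a - L, by simpa using (tendsto_const_nhds (x := a)).sub hL⟩,
    fun ⟨L, hL⟩ => ⟨a - L, tendsto_const_nhds.sub hL⟩⟩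

namespace Complex

theorem norm_natCast_cpow_eventuallyEq (w : ℂ) :
    (fun n : ℕ => ‖(n : ℂ) ^ w‖) =ᶠ[atTop] fun n => (n : ℝ) ^ w.re := by
  filter_upwards [eventually_ge_atTop 1] with n hn using norm_natCast_cpow_of_pos hn w

theorem tendsto_natCast_cpow_zero {w : ℂ} (hw : w.re < 0) :
    Tendsto (fun n : ℕ => (n : ℂ) ^ w) atTop (𝓝 0) := by
  rw [tendsto_zero_iff_norm_tendsto_zero]
  refine Tendsto.congr' (norm_natCast_cpow_eventuallyEq w).symm ?_
  have := (tendsto_rpow_neg_atTop (neg_pos.2 hw)).comp tendsto_natCast_atTop_atTop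
  simp only [neg_neg] at this
  exact this

theorem tendsto_norm_natCast_cpow_atTop {w : ℂ} (hw : 0 < w.re) :
    Tendsto (fun n : ℕ => ‖(n : ℂ) ^ w‖) atTop atTop :=
  ((tendsto_rpow_atTop hw).comp tendsto_natCast_atTop_atTop).congr'
    (norm_natCast_cpow_eventuallyEq w).symm

/-- Comparing `n ^ w` with `⌊a n⌋ ^ w = (⌊a n⌋ / n) ^ w * n ^ w`, whose first factor tends to
`a ^ w`. -/
theorem ofReal_cpow_eq_one_of_tendsto_natCast_cpow {w c : ℂ}
    (hc : Tendsto (fun n : ℕ => (n : ℂ) ^ w) atTop (𝓝 c)) (hc0 : c ≠ 0) {a : ℝ} (ha : 0 < a) :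
    (a : ℂ) ^ w = 1 := by
  set k : ℕ → ℕ := fun n => ⌊a * n⌋₊
  have hratio : Tendsto (fun n : ℕ => (((k n : ℝ) / n : ℝ) : ℂ) ^ w) atTop (𝓝 ((a : ℂ) ^ w)) :=
    (continuousAt_ofReal_cpow_const a w (Or.inr ha.ne')).tendsto.comp
      ((tendsto_nat_floor_mul_div_atTop ha.le).comp tendsto_natCast_atTop_atTop)
  have hk : Tendsto (fun n => (k n : ℂ) ^ w) atTop (𝓝 c) :=
    hc.comp (tendsto_nat_floor_mul_atTop a ha)
  have hsplit : ∀ᶠ n : ℕ in atTop,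
      (((k n : ℝ) / n : ℝ) : ℂ) ^ w * (n : ℂ) ^ w = (k n : ℂ) ^ w := by
    filter_upwards [eventually_ne_atTop 0] with n hn
    rw [← ofReal_natCast n, ← mul_cpow_ofReal_nonneg (by positivity) n.cast_nonneg,
      ← ofReal_mul, div_mul_cancel₀ _ (Nat.cast_ne_zero.2 hn), ofReal_natCast]
  have := tendsto_nhds_unique ((hratio.mul hc).congr' hsplit) hk
  exact (mul_eq_right₀ hc0).1 this

theorem not_tendsto_natCast_cpow_of_re_eq_zero {w : ℂ} (hre : w.re = 0) (hw : w ≠ 0) (c : ℂ) :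
    ¬ Tendsto (fun n : ℕ => (n : ℂ) ^ w) atTop (𝓝 c) := by
  intro hc
  have hnorm : ‖c‖ = 1 := by
    refine tendsto_nhds_unique hc.norm (tendsto_const_nhds.congr' ?_)
    filter_upwards [norm_natCast_cpow_eventuallyEq w] with n hn
    rw [hn, hre, Real.rpow_zero]
  have him : w.im ≠ 0 := fun him => hw (ext hre him)
  have hminus : ((Real.exp (Real.pi / w.im) : ℝ) : ℂ) ^ w = -1 := by
    rw [cpow_def_of_ne_zero (by exact_mod_cast (Real.exp_pos _).ne'),
      ← ofReal_log (Real.exp_pos _).le, Real.log_exp, ← exp_pi_mul_I]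
    congr 1
    apply ext <;> simp [hre]
    field_simp
  have := ofReal_cpow_eq_one_of_tendsto_natCast_cpow hc (norm_ne_zero_iff.1 (by simp [hnorm]))
    (Real.exp_pos (Real.pi / w.im))
  rw [hminus] at this
  norm_num at this

theorem exists_tendsto_natCast_cpow_iff (w : ℂ) :
    (∃ c, Tendsto (fun n : ℕ => (n : ℂ) ^ w) atTop (𝓝 c)) ↔ w = 0 ∨ w.re < 0 := by
  refine ⟨fun ⟨c, hc⟩ => ?_, ?_⟩
  · by_contra! h
    rcases h.2.lt_or_eq with hpos | hzero
    · exact not_tendsto_atTop_of_tendsto_nhds hc.norm (tendsto_norm_natCast_cpow_atTop hpos)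
    · exact not_tendsto_natCast_cpow_of_re_eq_zero hzero.symm h.1 c hc
  · rintro (rfl | hw)
    · exact ⟨1, by simp⟩
    · exact ⟨0, tendsto_natCast_cpow_zero hw⟩

end Complex

noncomputable def stirlingPartialSum (z : ℂ) (N : ℕ) : ℂ :=
  ∑ j ∈ range N, (j ! : ℂ) / ∏ i ∈ range (j + 1), (z + (i + 1))

theorem stirlingPartialSum_zero (N : ℕ) :
    stirlingPartialSum 0 N = ((∑ j ∈ range N, 1 / ((j : ℝ) + 1) : ℝ) : ℂ) := by
  push_cast
  refine sum_congr rfl fun j _ => ?_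
  have hprod : ∏ i ∈ range (j + 1), ((0 : ℂ) + (i + 1)) = ((j + 1) ! : ℂ) := by
    simp [← prod_range_add_one_eq_factorial]
  rw [hprod]
  push_cast [factorial_succ]
  field_simp
  exact div_self (Nat.cast_ne_zero.2 (factorial_ne_zero j))

theorem not_exists_tendsto_stirlingPartialSum_zero :
    ¬ ∃ L, Tendsto (stirlingPartialSum 0) atTop (𝓝 L) := by
  rintro ⟨L, hL⟩
  have hre := (Complex.continuous_re.tendsto L).comp hL
  simp only [Function.comp_def, stirlingPartialSum_zero, Complex.ofReal_re] at hre
  exact not_tendsto_atTop_of_tendsto_nhds hre Real.tendsto_sum_range_one_div_nat_succ_atTop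

theorem stirlingPartialSum_eq {z : ℂ} (hz : ∀ m : ℕ, z ≠ -m) (N : ℕ) :
    stirlingPartialSum z N = 1 / z - N ! / ∏ j ∈ range (N + 1), (z + j) := by
  have hshift : ∀ j : ℕ, z + j ≠ 0 := fun j h => hz j (eq_neg_of_add_eq_zero_left h)
  have hz0 : z ≠ 0 := by simpa using hshift 0
  induction N with
  | zero => simp [stirlingPartialSum]
  | succ N ih =>
    set P := ∏ j ∈ range (N + 1), (z + j)
    have hP : P ≠ 0 := prod_ne_zero_iff.2 fun j _ => hshift j
    have hN : z + (N + 1) ≠ 0 := by exact_mod_cast hshift (N + 1)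
    have hP' : ∏ j ∈ range (N + 2), (z + j) = P * (z + (N + 1)) := by
      rw [prod_range_succ]
      push_cast
      rfl
    have hQ : ∏ i ∈ range (N + 1), (z + (i + 1)) = P * (z + (N + 1)) / z := by
      rw [eq_div_iff hz0, ← hP', prod_range_succ' _ (N + 1)]
      push_cast
      ring
    rw [stirlingPartialSum, sum_range_succ, ← stirlingPartialSum, ih, hP', hQ]
    push_cast [factorial_succ]
    field_simp
    ring

theorem GammaSeq_mul_natCast_cpow_neg (z : ℂ) {n : ℕ} (hn : n ≠ 0) :
    Complex.GammaSeq z n * (n : ℂ) ^ (-z) = n ! / ∏ j ∈ range (n + 1), (z + j) := by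
  have hpow : (n : ℂ) ^ z ≠ 0 := Complex.cpow_ne_zero_iff.2 (Or.inl (by exact_mod_cast hn))
  rw [Complex.GammaSeq, Complex.cpow_neg]
  field_simp

theorem stirlingPartialSum_eventuallyEq {z : ℂ} (hz : ∀ m : ℕ, z ≠ -m) :
    stirlingPartialSum z =ᶠ[atTop] fun N => 1 / z - Complex.GammaSeq z N * (N : ℂ) ^ (-z) := by
  filter_upwards [eventually_ne_atTop 0] with N hN
  rw [stirlingPartialSum_eq hz, GammaSeq_mul_natCast_cpow_neg z hN]

/-- Stirling's inverse factorial series for `1/z`: for `z` not a negative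
integer, the series `∑_{k=1}^∞ (k-1)!/((z+1)(z+2)⋯(z+k))` converges (in the
sense of its partial sums) if and only if `Re z > 0`, and in that case its
sum is `1/z`.  The `k`-th term (for `k ≥ 1`) is encoded with index `k-1 : ℕ`,
so the term of index `j : ℕ` is `j! / ((z+1)⋯(z+j+1))`. -/
theorem stmt_13 (z : ℂ) (hz : ∀ n : ℤ, n < 0 → z ≠ (n : ℂ)) :
    ((∃ L : ℂ, Filter.Tendsto
        (fun N : ℕ => ∑ j ∈ Finset.range N,
          (Nat.factorial j : ℂ) / ∏ i ∈ Finset.range (j + 1), (z + (i + 1)))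
        Filter.atTop (nhds L)) ↔ 0 < z.re) ∧
    (0 < z.re → Filter.Tendsto
        (fun N : ℕ => ∑ j ∈ Finset.range N,
          (Nat.factorial j : ℂ) / ∏ i ∈ Finset.range (j + 1), (z + (i + 1)))
        Filter.atTop (nhds (1 / z))) := by
  change ((∃ L, Tendsto (stirlingPartialSum z) atTop (𝓝 L)) ↔ 0 < z.re) ∧
    (0 < z.re → Tendsto (stirlingPartialSum z) atTop (𝓝 (1 / z)))
  rcases eq_or_ne z 0 with rfl | hz0
  · exact ⟨iff_of_false not_exists_tendsto_stirlingPartialSum_zero (lt_irrefl 0),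
      fun h => (lt_irrefl 0 h).elim⟩
  have hpole : ∀ m : ℕ, z ≠ -m := by
    rintro (_ | m) h
    · exact hz0 (by simpa using h)
    · exact hz (-(m + 1)) (by omega) (by rw [h]; push_cast; ring)
  have hS := stirlingPartialSum_eventuallyEq hpole
  refine ⟨?_, fun hre => ?_⟩
  · rw [exists_congr fun L => tendsto_congr' hS, exists_tendsto_const_sub_iff,
      exists_tendsto_mul_iff_of_tendsto (Complex.GammaSeq_tendsto_Gamma z)
        (Complex.Gamma_ne_zero hpole), Complex.exists_tendsto_natCast_cpow_iff]
    simp [hz0]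
  · have hR := (Complex.GammaSeq_tendsto_Gamma z).mul
      (Complex.tendsto_natCast_cpow_zero (w := -z) (by simpa using hre))
    rw [mul_zero] at hR
    simpa using (tendsto_const_nhds (x := 1 / z)).sub hR |>.congr' hS.symm
end

section
/- Let F be a field, let n be a natural number, and let z, z_1, …, z_n ∈ F satisfy z ≠ 0 and z + z_k ≠ 0 for every k with 1 ≤ k ≤ n. Then 1/z = ∑_{k=1}^{n} (z_1·z_2⋯z_{k−1})/((z+z_1)(z+z_2)⋯(z+z_k)) + (z_1·z_2⋯z_n)/(z·(z+z_1)(z+z_2)⋯(z+z_n)), where the numerator product z_1⋯z_{k−1} is empty (equal to 1) when k = 1. -/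
/-! Peeling off the last factor `z + w` of the remainder term, via
`1/z = 1/(z+w) + w/(z(z+w))`, turns the identity for `n` into the identity for `n + 1`. -/

lemma div_mul_eq_div_mul_add_add_mul_div {F : Type*} [Field F] (a b : F) {z w : F}
    (hz : z ≠ 0) (hzw : z + w ≠ 0) :
    a / (z * b) = a / (b * (z + w)) + a * w / (z * (b * (z + w))) := by
  rcases eq_or_ne b 0 with rfl | hb
  · simp
  · field_simp

/-- Nicole's partial-fraction identity: in a field `F`, if `z ≠ 0` and
`z + z_k ≠ 0` for `1 ≤ k ≤ n`, then
`1/z = ∑_{k=1}^n z₁⋯z_{k-1}/((z+z₁)⋯(z+z_k)) + z₁⋯z_n/(z(z+z₁)⋯(z+z_n))`. -/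
theorem stmt_15 (F : Type*) [Field F] (n : ℕ) (z : F) (zs : ℕ → F)
    (hz : z ≠ 0) (hzk : ∀ k : ℕ, 1 ≤ k → k ≤ n → z + zs k ≠ 0) :
    1 / z =
      (∑ k ∈ Finset.Icc 1 n,
        (∏ j ∈ Finset.Ico 1 k, zs j) / ∏ j ∈ Finset.Icc 1 k, (z + zs j)) +
      (∏ j ∈ Finset.Icc 1 n, zs j) / (z * ∏ j ∈ Finset.Icc 1 n, (z + zs j)) := by
  induction n with
  | zero => simp
  | succ n ih =>
    rw [ih fun k hk hkn => hzk k hk (by omega), Finset.sum_Icc_succ_top (by omega), add_assoc,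
      Finset.prod_Icc_succ_top (by omega), Finset.prod_Icc_succ_top (by omega),
      Finset.Ico_add_one_right_eq_Icc]
    congr 1
    exact div_mul_eq_div_mul_add_add_mul_div _ _ hz (hzk (n + 1) (by omega) le_rfl)
end
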